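/- arXiv:1708.09130 — 10 statements merged into one kernel-verified Lean document; each statement's English description precedes it below -/
import Mathlib

section
/- For the cycle graph C_n with n ≥ 5, the general position number gp(C_n) equals 3. -/
open SimpleGraph

/-- `S` is a general position set of `G`: no three distinct vertices of `S`
lie on a common geodesic. -/
def IsGPSet {V : Type*} (G : SimpleGraph V) (S : Set V) : Prop :=
  ∀ x ∈ S, ∀ y ∈ S, ∀ z ∈ S, x ≠ y → y ≠ z → x ≠ z →
    G.dist x z ≠ G.dist x y + G.dist y z

/-- The general position number of `G`. -/
noncomputable def gpNumber {V : Type*} (G : SimpleGraph V) : ℕ :=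
  sSup {n | ∃ S : Set V, IsGPSet G S ∧ S.Finite ∧ S.ncard = n}

/-! On `C_n` the distance between two vertices is the length of the shorter of the two arcs
joining them. Given four vertices `a < b < c < d` in cyclic order, either the arc `a b c` is at
most half the cycle, so `b` lies on a geodesic from `a` to `c`, or the complementary arc `c d a`
is shorter than half, so `d` lies on a geodesic from `c` to `a`; hence `gp(C_n) ≤ 3`.
Conversely, three vertices cutting the cycle into arcs that are all shorter than `n / 2` are in
general position, and for `n ≥ 5` the arcs `k, n - 2k, k` with `k = ⌊(n - 1) / 2⌋` qualify. -/

theorem Fin.val_sub_eq_ite {n : ℕ} (a b : Fin n) :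
    (a - b).val = if b ≤ a then a.val - b.val else n + a.val - b.val := by
  split_ifs with h
  · exact Fin.coe_sub_iff_le.2 h
  · exact Fin.coe_sub_iff_lt.2 (not_le.1 h)

theorem IsGPSet.mono {V : Type*} {G : SimpleGraph V} {S T : Set V} (h : IsGPSet G T)
    (hST : S ⊆ T) : IsGPSet G S :=
  fun x hx y hy z hz => h x (hST hx) y (hST hy) z (hST hz)

theorem isGPSet_triple {V : Type*} {G : SimpleGraph V} {a b c : V}
    (ha : G.dist b c ≠ G.dist a b + G.dist a c)
    (hb : G.dist a c ≠ G.dist a b + G.dist b c)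
    (hc : G.dist a b ≠ G.dist a c + G.dist b c) :
    IsGPSet G {a, b, c} := by
  have := G.dist_comm (u := a) (v := b)
  have := G.dist_comm (u := a) (v := c)
  have := G.dist_comm (u := b) (v := c)
  intro x hx y hy z hz hxy hyz hxz
  simp only [Set.mem_insert_iff, Set.mem_singleton_iff] at hx hy hz
  rcases hx with rfl | rfl | rfl <;> rcases hy with rfl | rfl | rfl <;>
    rcases hz with rfl | rfl | rfl <;> first | contradiction | omega

theorem gpNumber_eq_of_forall_ncard_le {V : Type*} {G : SimpleGraph V} {k : ℕ}
    (hS : ∃ S : Set V, IsGPSet G S ∧ S.Finite ∧ S.ncard = k)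
    (hle : ∀ S : Set V, IsGPSet G S → S.Finite → S.ncard ≤ k) :
    gpNumber G = k := by
  have hk : ∀ m ∈ {m | ∃ S : Set V, IsGPSet G S ∧ S.Finite ∧ S.ncard = m}, m ≤ k := by
    rintro _ ⟨S, hGP, hfin, rfl⟩
    exact hle S hGP hfin
  exact le_antisymm (csSup_le ⟨k, hS⟩ hk) (le_csSup ⟨k, hk⟩ hS)

namespace SimpleGraph

variable {n : ℕ}

theorem cycleGraph_dist_add_one_le [NeZero n] (u : Fin n) :
    (cycleGraph n).dist u (u + 1) ≤ 1 := by
  rcases Nat.lt_or_ge n 2 with hn | hn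
  · have : Subsingleton (Fin n) := Fin.subsingleton_iff_le_one.2 (by omega)
    simp [Subsingleton.elim (u + 1) u]
  · refine (dist_eq_one_iff_adj.2 (cycleGraph_adj'.2 (Or.inr ?_))).le
    rw [add_sub_cancel_left, Fin.val_one', Nat.mod_eq_of_lt hn]

open Fin.NatCast in
theorem cycleGraph_dist_add_natCast_le [NeZero n] (u : Fin n) (k : ℕ) :
    (cycleGraph n).dist u (u + k) ≤ k := by
  induction k with
  | zero => simp
  | succ k ih =>
    calc (cycleGraph n).dist u (u + (k + 1 : ℕ))
        ≤ (cycleGraph n).dist u (u + k) + (cycleGraph n).dist (u + k) (u + k + 1) := by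
          rw [Nat.cast_succ, ← add_assoc]
          exact (cycleGraph_preconnected _ _).dist_triangle_right u
      _ ≤ k + 1 := add_le_add ih (cycleGraph_dist_add_one_le _)

theorem le_length_of_cycleGraph_walk {u v : Fin n} (p : (cycleGraph n).Walk u v) :
    min (v - u).val (u - v).val ≤ p.length := by
  induction p with
  | nil => simp [Fin.val_sub_eq_ite]
  | cons h q ih =>
    rw [cycleGraph_adj'] at h
    rw [Walk.length_cons]
    simp only [Fin.val_sub_eq_ite] at *
    split_ifs at * <;> fin_omega

open Fin.NatCast in
theorem cycleGraph_dist (u v : Fin n) :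
    (cycleGraph n).dist u v = min (v - u).val (u - v).val := by
  have : NeZero n := ⟨u.pos.ne'⟩
  refine le_antisymm (le_min ?_ ?_) ?_
  · simpa using cycleGraph_dist_add_natCast_le u (v - u).val
  · simpa [dist_comm] using cycleGraph_dist_add_natCast_le v (u - v).val
  · obtain ⟨p, hp⟩ := (cycleGraph_preconnected u v).exists_walk_length_eq_dist
    exact hp ▸ le_length_of_cycleGraph_walk p

theorem cycleGraph_dist_of_le {u v : Fin n} (h : u ≤ v) :
    (cycleGraph n).dist u v = min (v.val - u.val) (n - (v.val - u.val)) := by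
  rw [cycleGraph_dist, Fin.val_sub_eq_ite, Fin.val_sub_eq_ite]
  split_ifs <;> fin_omega

theorem not_isGPSet_cycleGraph_four {a b c d : Fin n} (hab : a < b) (hbc : b < c) (hcd : c < d) :
    ¬ IsGPSet (cycleGraph n) {a, b, c, d} := by
  intro hGP
  have hac := hab.trans hbc
  have had := hac.trans hcd
  rcases le_or_gt (2 * (c.val - a.val)) n with h | h
  · refine hGP a (by simp) b (by simp) c (by simp) hab.ne hbc.ne hac.ne ?_
    rw [cycleGraph_dist_of_le hac.le, cycleGraph_dist_of_le hab.le, cycleGraph_dist_of_le hbc.le]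
    fin_omega
  · refine hGP c (by simp) d (by simp) a (by simp) hcd.ne had.ne' hac.ne' ?_
    rw [dist_comm (u := c) (v := a), dist_comm (u := d) (v := a), cycleGraph_dist_of_le hac.le,
      cycleGraph_dist_of_le hcd.le, cycleGraph_dist_of_le had.le]
    fin_omega

theorem ncard_le_three_of_isGPSet_cycleGraph {S : Set (Fin n)}
    (hS : IsGPSet (cycleGraph n) S) : S.ncard ≤ 3 := by
  classical
  by_contra! h
  obtain ⟨t, htS, ht⟩ := Finset.exists_subset_card_eq (s := S.toFinset) (n := 4)
    (by rw [← Set.ncard_eq_toFinset_card']; omega)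
  have hf := (t.orderEmbOfFin ht).strictMono
  refine not_isGPSet_cycleGraph_four (hf (show (0 : Fin 4) < 1 by decide))
    (hf (show (1 : Fin 4) < 2 by decide)) (hf (show (2 : Fin 4) < 3 by decide)) (hS.mono ?_)
  intro x hx
  simp only [Set.mem_insert_iff, Set.mem_singleton_iff] at hx
  rcases hx with rfl | rfl | rfl | rfl <;>
    exact Set.mem_toFinset.1 (htS (t.orderEmbOfFin_mem ht _))

theorem isGPSet_cycleGraph_of_arcs_lt {a b c : Fin n} (hab : a < b) (hbc : b < c)
    (h₁ : 2 * (b.val - a.val) < n) (h₂ : 2 * (c.val - b.val) < n)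
    (h₃ : 2 * (n - (c.val - a.val)) < n) :
    IsGPSet (cycleGraph n) {a, b, c} := by
  have hac := hab.trans hbc
  apply isGPSet_triple <;>
    rw [cycleGraph_dist_of_le hab.le, cycleGraph_dist_of_le hbc.le, cycleGraph_dist_of_le hac.le] <;>
    fin_omega

end SimpleGraph

theorem gp_cycleGraph (n : ℕ) (hn : 5 ≤ n) : gpNumber (cycleGraph n) = 3 := by
  let a : Fin n := ⟨0, by omega⟩
  let b : Fin n := ⟨(n - 1) / 2, by omega⟩
  let c : Fin n := ⟨n - (n - 1) / 2, by omega⟩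
  have hab : a < b := Fin.mk_lt_mk.2 (by omega)
  have hbc : b < c := Fin.mk_lt_mk.2 (by omega)
  have habc : IsGPSet (cycleGraph n) {a, b, c} :=
    isGPSet_cycleGraph_of_arcs_lt hab hbc (by simp [a, b]; omega) (by simp [b, c]; omega)
      (by simp [a, c]; omega)
  have hcard : ({a, b, c} : Set (Fin n)).ncard = 3 :=
    Set.ncard_eq_three.2 ⟨a, b, c, hab.ne, (hab.trans hbc).ne, hbc.ne, rfl⟩
  exact gpNumber_eq_of_forall_ncard_le ⟨_, habc, Set.toFinite _, hcard⟩
    fun S hS _ => ncard_le_three_of_isGPSet_cycleGraph hS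
end

section
/- If k ≥ 2 and ℓ ≥ 3, then the general position number of the theta graph Θ(k,ℓ) equals k + 1. -/
/-!
Each path `A – branch i – B` is a geodesic of length `ℓ`, so a general position set `S` meets it
in at most two vertices; and a shortest path between two different branches passes through `A`
or `B`, so two branches cannot both carry two vertices of `S`. Writing `e = |S ∩ {A, B}|` and
`sᵢ` for the number of vertices of `S` inside branch `i`, this gives `e + sᵢ ≤ 2` and `sᵢ ≥ 2`
for at most one `i`, whence `|S| ≤ k + 1`. Conversely `A` together with the `k` neighbours of
`B` is in general position: the neighbours are pairwise at distance `2`, and at distance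
`ℓ - 1 > 1` from `A`.
-/

open SimpleGraph

/-- The theta graph `Θ(k, ℓ)`: two vertices `A = Sum.inl 0` and `B = Sum.inl 1`
joined by `k` internally disjoint paths, each of length `ℓ`.
The internal vertices are `Sum.inr (i, j)`, the `j`-th internal vertex
(out of `ℓ - 1`) on the `i`-th path. -/
def thetaGraph (k ℓ : ℕ) : SimpleGraph (Fin 2 ⊕ (Fin k × Fin (ℓ - 1))) :=
  SimpleGraph.fromRel (fun a b =>
    match a, b with
    | Sum.inl a, Sum.inr (_, j) => a = 0 ∧ (j : ℕ) = 0
    | Sum.inr (i, j), Sum.inr (i', j') => i = i' ∧ (j' : ℕ) = (j : ℕ) + 1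
    | Sum.inr (_, j), Sum.inl b => b = 1 ∧ (j : ℕ) = ℓ - 2
    | _, _ => False)

namespace SimpleGraph

variable {V : Type*} {G : SimpleGraph V} {u v w x y z : V}

lemma Walk.le_add_length_of_adj {f : V → ℕ} (hf : ∀ ⦃a b⦄, G.Adj a b → f a ≤ f b + 1)
    (p : G.Walk u v) : f u ≤ f v + p.length := by
  induction p with
  | nil => simp
  | cons h _ ih =>
    have := hf h
    rw [Walk.length_cons]
    omega

lemma Reachable.le_add_dist_of_adj {f : V → ℕ} (hf : ∀ ⦃a b⦄, G.Adj a b → f a ≤ f b + 1)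
    (h : G.Reachable u v) : f u ≤ f v + G.dist u v := by
  obtain ⟨p, hp⟩ := h.exists_walk_length_eq_dist
  exact hp ▸ p.le_add_length_of_adj hf

lemma exists_walk_length_eq_sub_of_adj_succ {f : ℕ → V} {s t : ℕ} (hst : s ≤ t)
    (hf : ∀ n, s ≤ n → n < t → G.Adj (f n) (f (n + 1))) :
    ∃ p : G.Walk (f s) (f t), p.length = t - s := by
  induction t, hst using Nat.le_induction with
  | base => exact ⟨.nil, by simp⟩
  | succ t hst ih =>
    obtain ⟨p, hp⟩ := ih fun n hsn hnt => hf n hsn (by omega)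
    exact ⟨p.concat (hf t hst (by omega)), by rw [Walk.length_concat]; omega⟩

lemma Walk.exists_mem_support_of_apply_ne {β : Type*} {C : Set V} (c : V → β)
    (hc : ∀ ⦃a b⦄, G.Adj a b → a ∉ C → b ∉ C → c a = c b) (p : G.Walk u v) (huv : c u ≠ c v) :
    ∃ z ∈ p.support, z ∈ C := by
  induction p with
  | nil => exact absurd rfl huv
  | @cons a b _ h p ih =>
    by_cases ha : a ∈ C
    · exact ⟨a, p.support.mem_cons_self, ha⟩
    by_cases hb : b ∈ C
    · exact ⟨b, List.mem_cons_of_mem _ p.start_mem_support, hb⟩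
    obtain ⟨z, hz, hzC⟩ := ih (hc h ha hb ▸ huv)
    exact ⟨z, List.mem_cons_of_mem _ hz, hzC⟩

namespace Connected

lemma exists_dist_eq_add_of_forall_walk (hG : G.Connected) {C : Set V}
    (h : ∀ p : G.Walk u v, ∃ z ∈ p.support, z ∈ C) :
    ∃ z ∈ C, G.dist u v = G.dist u z + G.dist z v := by
  classical
  obtain ⟨p, hp⟩ := hG.exists_walk_length_eq_dist u v
  obtain ⟨z, hz, hzC⟩ := h p
  refine ⟨z, hzC, le_antisymm hG.dist_triangle ?_⟩
  have hsplit := congrArg Walk.length (p.take_spec hz)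
  rw [Walk.length_append] at hsplit
  have := dist_le (p.takeUntil z hz)
  have := dist_le (p.dropUntil z hz)
  omega

lemma dist_eq_add_of_dist_eq_add_right (hG : G.Connected)
    (hxw : G.dist x w = G.dist x y + G.dist y w)
    (hyw : G.dist y w = G.dist y z + G.dist z w) : G.dist x w = G.dist x z + G.dist z w := by
  have := hG.dist_triangle (u := x) (v := y) (w := z)
  have := hG.dist_triangle (u := x) (v := z) (w := w)
  omega

lemma dist_eq_add_of_dist_eq_add_left (hG : G.Connected)
    (hxw : G.dist x w = G.dist x y + G.dist y w)
    (hxy : G.dist x y = G.dist x z + G.dist z y) : G.dist x w = G.dist x z + G.dist z w := by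
  have := hG.dist_triangle (u := z) (v := y) (w := w)
  have := hG.dist_triangle (u := x) (v := z) (w := w)
  omega

end Connected

end SimpleGraph

lemma IsGPSet.card_filter_le_two {V : Type*} {G : SimpleGraph V} (hG : G.Connected)
    [DecidableEq V] {S : Finset V} (hS : IsGPSet G S) {P : V → Prop} [DecidablePred P] {f : V → ℕ}
    (hf : ∀ u v, P u → P v → f u ≤ f v → G.dist u v + f u = f v) :
    (S.filter P).card ≤ 2 := by
  by_contra! h
  set T := S.filter P
  have hT : T.Nonempty := Finset.card_pos.mp (by omega)
  obtain ⟨x, hxT, hx⟩ := T.exists_min_image f hT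
  obtain ⟨z, hzT, hz⟩ := T.exists_max_image f hT
  obtain ⟨y, hy⟩ : ((T.erase x).erase z).Nonempty := by
    rw [← Finset.card_pos]
    have := Finset.pred_card_le_card_erase (s := T) (a := x)
    have := Finset.pred_card_le_card_erase (s := T.erase x) (a := z)
    omega
  simp only [Finset.mem_erase] at hy
  obtain ⟨hyz, hyx, hyT⟩ := hy
  simp only [T, Finset.mem_filter] at hxT hyT hzT
  have hxy := hf x y hxT.2 hyT.2 (hx y (by simpa [T] using hyT))
  have hyz' := hf y z hyT.2 hzT.2 (hz y (by simpa [T] using hyT))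
  have hxz := hf x z hxT.2 hzT.2 (by omega)
  have hxz_ne : x ≠ z := by
    rintro rfl
    have := hx y (by simpa [T] using hyT)
    exact hyx ((hG.dist_eq_zero_iff).mp (by omega)).symm
  exact hS x hxT.1 y hyT.1 z hzT.1 (Ne.symm hyx) hyz hxz_ne (by omega)

lemma IsGPSet.insert_of_equidistant {V : Type*} {G : SimpleGraph V} {T : Set V} {a : V}
    {D r : ℕ} (hT : ∀ x ∈ T, ∀ y ∈ T, x ≠ y → G.dist x y = D) (ha : ∀ x ∈ T, G.dist a x = r)
    (hD : 0 < D) (hDr : D ≠ 2 * r) : IsGPSet G (insert a T) := by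
  intro x hx y hy z hz hxy hyz hxz
  have ha' : ∀ x ∈ T, G.dist x a = r := fun x hx => dist_comm.trans (ha x hx)
  rcases hx with rfl | hx <;> rcases hy with rfl | hy <;> rcases hz with rfl | hz
  · exact absurd rfl hxy
  · exact absurd rfl hxy
  · exact absurd rfl hxz
  · rw [ha _ hy, ha _ hz, hT _ hy _ hz hyz]; omega
  · exact absurd rfl hyz
  · rw [ha' _ hx, ha _ hz, hT _ hx _ hz hxz]; omega
  · rw [ha' _ hx, ha' _ hy, hT _ hx _ hy hxy]; omega
  · rw [hT _ hx _ hy hxy, hT _ hy _ hz hyz, hT _ hx _ hz hxz]; omega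

lemma Fintype.add_sum_le_card_add_one {ι : Type*} [Fintype ι] [Nonempty ι] {e : ℕ} {s : ι → ℕ}
    (h : ∀ i, e + s i ≤ 2) (hpair : ∀ i j, i ≠ j → s i ≤ 1 ∨ s j ≤ 1) :
    e + ∑ i, s i ≤ Fintype.card ι + 1 := by
  classical
  obtain ⟨i₀⟩ := ‹Nonempty ι›
  rcases Nat.lt_or_ge e 2 with he | he
  · have hbig : (Finset.univ.filter fun i => 2 ≤ s i).card + e ≤ 1 := by
      rcases Nat.eq_zero_or_pos e with rfl | he0
      · refine Finset.card_le_one.mpr fun i hi j hj => ?_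
        by_contra hij
        simp only [Finset.mem_filter] at hi hj
        have := hpair i j hij
        omega
      · rw [Finset.card_eq_zero.mpr (Finset.filter_eq_empty_iff.mpr fun i _ => ?_)]
        · omega
        · have := h i; omega
    have hsum : ∑ i, s i ≤ ∑ i, (1 + if 2 ≤ s i then 1 else 0) :=
      Finset.sum_le_sum fun i _ => by have := h i; split_ifs <;> omega
    rw [Finset.sum_add_distrib, Finset.sum_boole] at hsum
    simp only [Finset.sum_const, Finset.card_univ, smul_eq_mul, mul_one, Nat.cast_id] at hsum
    omega
  · have hs : ∑ i, s i = 0 := Finset.sum_eq_zero fun i _ => by have := h i; omega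
    have := h i₀
    have := Fintype.card_pos (α := ι)
    omega

namespace thetaGraph

variable {k ℓ : ℕ}

@[simp] lemma not_adj_inl_inl {a b : Fin 2} : ¬(thetaGraph k ℓ).Adj (.inl a) (.inl b) := by
  simp [thetaGraph]

@[simp] lemma adj_inl_inr {a : Fin 2} {i : Fin k} {j : Fin (ℓ - 1)} :
    (thetaGraph k ℓ).Adj (.inl a) (.inr (i, j)) ↔
      a = 0 ∧ (j : ℕ) = 0 ∨ a = 1 ∧ (j : ℕ) = ℓ - 2 := by
  simp [thetaGraph]

@[simp] lemma adj_inr_inl {a : Fin 2} {i : Fin k} {j : Fin (ℓ - 1)} :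
    (thetaGraph k ℓ).Adj (.inr (i, j)) (.inl a) ↔
      a = 0 ∧ (j : ℕ) = 0 ∨ a = 1 ∧ (j : ℕ) = ℓ - 2 := by
  rw [adj_comm, adj_inl_inr]

@[simp] lemma adj_inr_inr {i i' : Fin k} {j j' : Fin (ℓ - 1)} :
    (thetaGraph k ℓ).Adj (.inr (i, j)) (.inr (i', j')) ↔
      i = i' ∧ ((j' : ℕ) = j + 1 ∨ (j : ℕ) = j' + 1) := by
  simp only [thetaGraph, fromRel_adj, ne_eq, Sum.inr.injEq, Prod.mk.injEq]
  grind

/-- Distance from `A` along any of the paths. -/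
def level (ℓ : ℕ) : Fin 2 ⊕ (Fin k × Fin (ℓ - 1)) → ℕ
  | .inl 0 => 0
  | .inl 1 => ℓ
  | .inr (_, j) => j + 1

def branch : Fin 2 ⊕ (Fin k × Fin (ℓ - 1)) → Option (Fin k)
  | .inl _ => none
  | .inr (i, _) => some i

@[simp] lemma level_inl_zero : level (k := k) ℓ (.inl 0) = 0 := rfl

@[simp] lemma level_inl_one : level (k := k) ℓ (.inl 1) = ℓ := rfl

@[simp] lemma level_inr (i : Fin k) (j : Fin (ℓ - 1)) : level ℓ (.inr (i, j)) = j + 1 := rfl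

@[simp] lemma branch_inl (a : Fin 2) : branch (k := k) (ℓ := ℓ) (.inl a) = none := rfl

@[simp] lemma branch_inr (i : Fin k) (j : Fin (ℓ - 1)) : branch (.inr (i, j)) = some i := rfl

/-- `v` lies on the geodesic `A – branch i – B`. -/
abbrev OnPath (i : Fin k) (v : Fin 2 ⊕ (Fin k × Fin (ℓ - 1))) : Prop :=
  branch v = none ∨ branch v = some i

/-- The vertex at level `t` of `A – branch i – B`. -/
def pathVertex (i : Fin k) (t : ℕ) : Fin 2 ⊕ (Fin k × Fin (ℓ - 1)) :=
  if h₀ : t = 0 then .inl 0 else if h : t < ℓ then .inr (i, ⟨t - 1, by omega⟩) else .inl 1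

lemma level_le (v : Fin 2 ⊕ (Fin k × Fin (ℓ - 1))) : level ℓ v ≤ ℓ := by
  rcases v with a | ⟨i, j⟩
  · fin_cases a <;> simp
  · simp; omega

lemma level_le_level_add_one_of_adj {u v : Fin 2 ⊕ (Fin k × Fin (ℓ - 1))}
    (h : (thetaGraph k ℓ).Adj u v) : level ℓ u ≤ level ℓ v + 1 := by
  rcases u with a | ⟨i, j⟩ <;> rcases v with b | ⟨i', j'⟩
  all_goals try fin_cases a
  all_goals try fin_cases b
  all_goals simp at h ⊢ <;> omega

lemma branch_eq_of_adj {u v : Fin 2 ⊕ (Fin k × Fin (ℓ - 1))} (h : (thetaGraph k ℓ).Adj u v)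
    (hu : branch u ≠ none) (hv : branch v ≠ none) : branch u = branch v := by
  rcases u with _ | ⟨i, j⟩ <;> rcases v with _ | ⟨i', j'⟩
  all_goals simp_all

lemma level_lt_of_branch_eq_some {v : Fin 2 ⊕ (Fin k × Fin (ℓ - 1))} {i : Fin k}
    (h : branch v = some i) : level ℓ v < ℓ := by
  rcases v with _ | ⟨i', j⟩
  · simp at h
  · simp; omega

lemma level_eq_zero_or_eq_of_branch_eq_none {v : Fin 2 ⊕ (Fin k × Fin (ℓ - 1))}
    (h : branch v = none) : level ℓ v = 0 ∨ level ℓ v = ℓ := by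
  rcases v with a | ⟨_, _⟩
  · fin_cases a <;> simp
  · simp at h

lemma eq_of_level_eq {u v : Fin 2 ⊕ (Fin k × Fin (ℓ - 1))} {i : Fin k}
    (hu : branch u = some i) (hv : branch v = some i) (h : level ℓ u = level ℓ v) : u = v := by
  rcases u with _ | ⟨i₁, j₁⟩ <;> rcases v with _ | ⟨i₂, j₂⟩
  all_goals simp_all [Fin.ext_iff]

lemma level_pathVertex (i : Fin k) {t : ℕ} (ht : t ≤ ℓ) :
    level ℓ (pathVertex (ℓ := ℓ) i t) = t := by
  unfold pathVertex; split_ifs <;> simp <;> omega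

lemma branch_pathVertex (i : Fin k) {t : ℕ} (h0 : 0 < t) (ht : t < ℓ) :
    branch (pathVertex (ℓ := ℓ) i t) = some i := by
  simp [pathVertex, h0.ne', ht]

lemma pathVertex_level (hl : ℓ ≠ 0) {i : Fin k} {v : Fin 2 ⊕ (Fin k × Fin (ℓ - 1))}
    (hv : OnPath i v) : pathVertex i (level ℓ v) = v := by
  rcases v with a | ⟨i', j⟩
  · fin_cases a <;> simp [pathVertex, hl]
  · have := j.isLt
    obtain rfl : i' = i := by simpa [OnPath] using hv
    simp [pathVertex, show (j : ℕ) + 1 < ℓ by omega]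

lemma adj_pathVertex_succ (hl : 2 ≤ ℓ) (i : Fin k) {t : ℕ} (ht : t < ℓ) :
    (thetaGraph k ℓ).Adj (pathVertex i t) (pathVertex i (t + 1)) := by
  unfold pathVertex
  split_ifs <;> simp_all <;> omega

lemma exists_walk_pathVertex (hl : 2 ≤ ℓ) (i : Fin k) {s t : ℕ} (hst : s ≤ t) (ht : t ≤ ℓ) :
    ∃ p : (thetaGraph k ℓ).Walk (pathVertex i s) (pathVertex i t), p.length = t - s :=
  exists_walk_length_eq_sub_of_adj_succ hst fun _ _ hn => adj_pathVertex_succ hl i (by omega)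

lemma connected (hl : 2 ≤ ℓ) (hk : 0 < k) : (thetaGraph k ℓ).Connected := by
  have hreach (v) : (thetaGraph k ℓ).Reachable (.inl 0) v := by
    obtain ⟨i, hi⟩ : ∃ i : Fin k, OnPath i v := by
      cases h : branch v with
      | none => exact ⟨⟨0, hk⟩, .inl h⟩
      | some i => exact ⟨i, .inr h⟩
    obtain ⟨p, -⟩ := exists_walk_pathVertex hl i (Nat.zero_le _) (level_le v)
    have hp := p.reachable
    rw [pathVertex_level (by omega) hi] at hp
    simpa [pathVertex] using hp
  exact ⟨fun u v => (hreach u).symm.trans (hreach v)⟩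

lemma dist_add_level (hl : 2 ≤ ℓ) {i : Fin k} {u v : Fin 2 ⊕ (Fin k × Fin (ℓ - 1))}
    (hu : OnPath i u) (hv : OnPath i v) (h : level ℓ u ≤ level ℓ v) :
    (thetaGraph k ℓ).dist u v + level ℓ u = level ℓ v := by
  obtain ⟨p, hp⟩ := exists_walk_pathVertex hl i h (level_le v)
  have hup := dist_le p
  have hreach := p.reachable
  rw [hp, pathVertex_level (by omega) hu, pathVertex_level (by omega) hv] at hup
  rw [pathVertex_level (by omega) hu, pathVertex_level (by omega) hv] at hreach
  have hlow := hreach.symm.le_add_dist_of_adj fun _ _ => level_le_level_add_one_of_adj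
  rw [dist_comm] at hlow
  omega

lemma dist_eq_add_of_level_le (hl : 2 ≤ ℓ) {i : Fin k} {u v w : Fin 2 ⊕ (Fin k × Fin (ℓ - 1))}
    (hu : OnPath i u) (hv : OnPath i v) (hw : OnPath i w)
    (huv : level ℓ u ≤ level ℓ v) (hvw : level ℓ v ≤ level ℓ w) :
    (thetaGraph k ℓ).dist u w = (thetaGraph k ℓ).dist u v + (thetaGraph k ℓ).dist v w := by
  have := dist_add_level hl hu hv huv
  have := dist_add_level hl hv hw hvw
  have := dist_add_level hl hu hw (huv.trans hvw)
  omega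

lemma exists_dist_eq_add_of_branch_ne (hl : 2 ≤ ℓ) {i j : Fin k}
    {x y : Fin 2 ⊕ (Fin k × Fin (ℓ - 1))} (hx : branch x = some i) (hy : branch y = some j)
    (hij : i ≠ j) : ∃ z, branch z = none ∧
      (thetaGraph k ℓ).dist x y = (thetaGraph k ℓ).dist x z + (thetaGraph k ℓ).dist z y :=
  (connected hl i.pos).exists_dist_eq_add_of_forall_walk fun p =>
    p.exists_mem_support_of_apply_ne branch (fun _ _ h ha hb => branch_eq_of_adj h ha hb)
      (by simp [hx, hy, hij])

lemma not_isGPSet_of_pairs_on_two_branches (hl : 2 ≤ ℓ) {S : Set (Fin 2 ⊕ (Fin k × Fin (ℓ - 1)))}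
    {i j : Fin k} (hij : i ≠ j) {x x' y y' : Fin 2 ⊕ (Fin k × Fin (ℓ - 1))}
    (hx : x ∈ S) (hx' : x' ∈ S) (hy : y ∈ S) (hy' : y' ∈ S)
    (hbx : branch x = some i) (hbx' : branch x' = some i)
    (hby : branch y = some j) (hby' : branch y' = some j)
    (hxx' : level ℓ x < level ℓ x') (hyy' : level ℓ y' < level ℓ y) :
    ¬IsGPSet (thetaGraph k ℓ) S := by
  intro hS
  have hG := connected hl i.pos
  have hne {u v : Fin 2 ⊕ (Fin k × Fin (ℓ - 1))} {a b : Fin k} (hu : branch u = some a)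
      (hv : branch v = some b) (hab : a ≠ b) : u ≠ v := by
    rintro rfl; simp_all
  obtain ⟨z, hz, hxy⟩ := exists_dist_eq_add_of_branch_ne hl hbx hby hij
  -- a geodesic from `x` to `y` runs through `A` or `B`, hence through `y'` or `x'` respectively
  rcases level_eq_zero_or_eq_of_branch_eq_none (ℓ := ℓ) hz with hzA | hzB
  · have hzy := dist_eq_add_of_level_le hl (.inl hz) (.inr hby') (.inr hby) (by omega) hyy'.le
    exact hS x hx y' hy' y hy (hne hbx hby' hij) (fun h => by simp [h] at hyy')
      (hne hbx hby hij) (hG.dist_eq_add_of_dist_eq_add_right hxy hzy)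
  · have hxz := dist_eq_add_of_level_le hl (.inr hbx) (.inr hbx') (.inl hz) hxx'.le
      (by have := level_lt_of_branch_eq_some (ℓ := ℓ) hbx'; omega)
    exact hS x hx x' hx' y hy (fun h => by simp [h] at hxx') (hne hbx' hby hij)
      (hne hbx hby hij) (hG.dist_eq_add_of_dist_eq_add_left hxy hxz)

lemma exists_level_lt_of_one_lt_card {S : Finset (Fin 2 ⊕ (Fin k × Fin (ℓ - 1)))} {i : Fin k}
    (h : 1 < (S.filter (branch · = some i)).card) :
    ∃ x ∈ S, ∃ x' ∈ S, branch x = some i ∧ branch x' = some i ∧ level ℓ x < level ℓ x' := by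
  obtain ⟨a, ha, b, hb, hab⟩ := Finset.one_lt_card.mp h
  rw [Finset.mem_filter] at ha hb
  rcases lt_or_gt_of_ne (mt (eq_of_level_eq ha.2 hb.2) hab) with hlt | hlt
  · exact ⟨a, ha.1, b, hb.1, ha.2, hb.2, hlt⟩
  · exact ⟨b, hb.1, a, ha.1, hb.2, ha.2, hlt⟩

theorem card_le_of_isGPSet (hk : 0 < k) (hl : 2 ≤ ℓ) {S : Finset (Fin 2 ⊕ (Fin k × Fin (ℓ - 1)))}
    (hS : IsGPSet (thetaGraph k ℓ) S) : S.card ≤ k + 1 := by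
  have : Nonempty (Fin k) := ⟨⟨0, hk⟩⟩
  rw [Finset.card_eq_sum_card_fiberwise (f := branch) (t := .univ) fun _ _ => Finset.mem_univ _,
    Fintype.sum_option]
  refine (Fintype.add_sum_le_card_add_one (ι := Fin k) (fun i => ?_) fun i j hij => ?_).trans_eq
    (by simp)
  · rw [← Finset.card_union_of_disjoint (Finset.disjoint_filter.mpr fun _ _ h => by simp [h]),
      ← Finset.filter_or]
    exact hS.card_filter_le_two (connected hl hk) fun u v hu hv => dist_add_level hl hu hv
  · by_contra! h
    obtain ⟨x, hx, x', hx', hbx, hbx', hxx'⟩ := exists_level_lt_of_one_lt_card h.1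
    obtain ⟨y', hy', y, hy, hby', hby, hyy'⟩ := exists_level_lt_of_one_lt_card h.2
    exact not_isGPSet_of_pairs_on_two_branches hl hij hx hx' hy hy' hbx hbx' hby hby' hxx' hyy' hS

theorem exists_isGPSet_ncard_eq (hl : 3 ≤ ℓ) :
    ∃ S : Set (Fin 2 ⊕ (Fin k × Fin (ℓ - 1))), IsGPSet (thetaGraph k ℓ) S ∧ S.ncard = k + 1 := by
  set tip : Fin k → Fin 2 ⊕ (Fin k × Fin (ℓ - 1)) := fun i => pathVertex i (ℓ - 1)
  have branch_tip (i) : branch (tip i) = some i := branch_pathVertex i (by omega) (by omega)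
  have level_tip (i) : level ℓ (tip i) = ℓ - 1 := level_pathVertex i (by omega)
  have dist_A_tip (i) : (thetaGraph k ℓ).dist (.inl 0) (tip i) = ℓ - 1 := by
    simpa [level_tip] using
      dist_add_level (u := .inl 0) (by omega) (.inl rfl) (.inr (branch_tip i)) (by simp)
  have dist_tip_B (i) : (thetaGraph k ℓ).dist (tip i) (.inl 1) = 1 := by
    have := dist_add_level (v := .inl 1) (by omega) (.inr (branch_tip i)) (.inl rfl)
      (by simp [level_tip])
    simp only [level_tip, level_inl_one] at this
    omega
  have dist_tip (i j) (hij : i ≠ j) : (thetaGraph k ℓ).dist (tip i) (tip j) = 2 := by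
    have hG := connected (ℓ := ℓ) (by omega) i.pos
    have hne : tip i ≠ tip j := fun h => hij (by simpa [branch_tip] using congrArg branch h)
    have hlow := hG.one_lt_dist_of_ne_of_not_adj hne fun h =>
      hij (by simpa [branch_tip] using
        branch_eq_of_adj h (by simp [branch_tip]) (by simp [branch_tip]))
    have hup := hG.dist_triangle (u := tip i) (v := .inl 1) (w := tip j)
    rw [dist_tip_B, dist_comm (u := Sum.inl 1), dist_tip_B] at hup
    omega
  refine ⟨insert (.inl 0) (Set.range tip),
    IsGPSet.insert_of_equidistant (D := 2) (r := ℓ - 1) ?_ ?_ two_pos (by omega), ?_⟩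
  · rintro _ ⟨i, rfl⟩ _ ⟨j, rfl⟩ hij
    exact dist_tip i j fun h => hij (h ▸ rfl)
  · rintro _ ⟨i, rfl⟩
    exact dist_A_tip i
  · have htip : Function.Injective tip := fun i j h => by simpa [branch_tip] using congrArg branch h
    rw [Set.ncard_insert_of_notMem (by rintro ⟨i, hi⟩; simpa [branch_tip] using congrArg branch hi),
      Set.ncard_range_of_injective htip, Nat.card_eq_fintype_card, Fintype.card_fin]

end thetaGraph

theorem gp_thetaGraph (k ℓ : ℕ) (hk : 2 ≤ k) (hl : 3 ≤ ℓ) :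
    gpNumber (thetaGraph k ℓ) = k + 1 := by
  obtain ⟨S₀, hS₀, hcard₀⟩ := thetaGraph.exists_isGPSet_ncard_eq (k := k) hl
  refine IsGreatest.csSup_eq ⟨⟨S₀, hS₀, S₀.toFinite, hcard₀⟩, ?_⟩
  rintro n ⟨S, hS, hSfin, rfl⟩
  rw [Set.ncard_eq_toFinset_card S hSfin]
  exact thetaGraph.card_le_of_isGPSet (by omega) (by omega) (by simpa using hS)
end

section
/- (Isometric Cover Lemma) If {H_1, ..., H_k} is an isometric cover of a connected graph G, then gp(G) ≤ gp(H_1) + gp(H_2) + ... + gp(H_k). -/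
/-!
A general position set `S` of `G` meets each `H i` in a general position set of `H i`, because
`H i` measures the same distances as `G`; these traces cover `S`, so `|S| ≤ ∑ i, gp(H i)`.
Conversely a general position set of `H i` is one of `G`, so when the sizes of general position
sets of `G` are bounded, so are those of `H i` and `gp(H i)` is a genuine maximum;
otherwise `gpNumber G = 0`, the junk value of `sSup` on an unbounded set of naturals.
-/

open SimpleGraph

/-- A subgraph `H` of `G` is isometric if distances in `H` agree with
distances in `G` for all pairs of vertices of `H`. -/
def IsIsometricSubgraph {V : Type*} {G : SimpleGraph V} (H : G.Subgraph) : Prop :=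
  ∀ x y : H.verts, H.coe.dist x y = G.dist (x : V) (y : V)

open Set Function

def gpSizes {V : Type*} (G : SimpleGraph V) : Set ℕ :=
  {n | ∃ S : Set V, IsGPSet G S ∧ S.Finite ∧ S.ncard = n}

section DistEmbedding

variable {V W : Type*} {G : SimpleGraph V} {G' : SimpleGraph W} {f : W → V}

lemma IsGPSet.image_of_dist_eq (hd : ∀ x y, G.dist (f x) (f y) = G'.dist x y)
    {T : Set W} (hT : IsGPSet G' T) : IsGPSet G (f '' T) := by
  rintro _ ⟨x, hx, rfl⟩ _ ⟨y, hy, rfl⟩ _ ⟨z, hz, rfl⟩ hxy hyz hxz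
  rw [hd, hd, hd]
  exact hT x hx y hy z hz (ne_of_apply_ne f hxy) (ne_of_apply_ne f hyz) (ne_of_apply_ne f hxz)

lemma IsGPSet.preimage_of_dist_eq (hf : Injective f)
    (hd : ∀ x y, G.dist (f x) (f y) = G'.dist x y)
    {S : Set V} (hS : IsGPSet G S) : IsGPSet G' (f ⁻¹' S) := by
  intro x hx y hy z hz hxy hyz hxz
  rw [← hd, ← hd, ← hd]
  exact hS _ hx _ hy _ hz (hf.ne hxy) (hf.ne hyz) (hf.ne hxz)

lemma bddAbove_gpSizes_of_dist_eq (hf : Injective f)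
    (hd : ∀ x y, G.dist (f x) (f y) = G'.dist x y) (hb : BddAbove (gpSizes G)) :
    BddAbove (gpSizes G') := by
  obtain ⟨B, hB⟩ := hb
  refine ⟨B, ?_⟩
  rintro _ ⟨T, hT, hTf, rfl⟩
  rw [← ncard_image_of_injective T hf]
  exact hB ⟨f '' T, hT.image_of_dist_eq hd, hTf.image f, rfl⟩

lemma ncard_le_gpNumber (hb : BddAbove (gpSizes G)) {S : Set V} (hS : IsGPSet G S)
    (hSf : S.Finite) : S.ncard ≤ gpNumber G :=
  le_csSup hb ⟨S, hS, hSf, rfl⟩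

lemma ncard_inter_range_le_gpNumber (hf : Injective f)
    (hd : ∀ x y, G.dist (f x) (f y) = G'.dist x y) (hb : BddAbove (gpSizes G)) {S : Set V}
    (hS : IsGPSet G S) (hSf : S.Finite) : (S ∩ range f).ncard ≤ gpNumber G' := by
  rw [← image_preimage_eq_inter_range, ncard_image_of_injective _ hf]
  exact ncard_le_gpNumber (bddAbove_gpSizes_of_dist_eq hf hd hb)
    (hS.preimage_of_dist_eq hf hd) (hSf.preimage hf.injOn)

end DistEmbedding

lemma IsIsometricSubgraph.ncard_inter_verts_le_gpNumber {V : Type*} {G : SimpleGraph V}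
    {H : G.Subgraph} (hH : IsIsometricSubgraph H) (hb : BddAbove (gpSizes G)) {S : Set V}
    (hS : IsGPSet G S) (hSf : S.Finite) : (S ∩ H.verts).ncard ≤ gpNumber H.coe := by
  simpa using ncard_inter_range_le_gpNumber Subtype.val_injective (fun x y ↦ (hH x y).symm)
    hb hS hSf

lemma gpNumber_eq_zero_of_not_bddAbove {V : Type*} {G : SimpleGraph V}
    (hb : ¬BddAbove (gpSizes G)) : gpNumber G = 0 :=
  Nat.sSup_of_not_bddAbove hb

theorem gp_isometric_cover_general {V : Type*} (G : SimpleGraph V)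
    (k : ℕ) (H : Fin k → G.Subgraph)
    (hiso : ∀ i, IsIsometricSubgraph (H i))
    (hcov : (⋃ i, (H i).verts) = Set.univ) :
    gpNumber G ≤ ∑ i, gpNumber (H i).coe := by
  by_cases hb : BddAbove (gpSizes G)
  · refine csSup_le' ?_
    rintro _ ⟨S, hS, hSf, rfl⟩
    calc S.ncard = (⋃ i, S ∩ (H i).verts).ncard := by rw [← inter_iUnion, hcov, inter_univ]
      _ ≤ ∑ i, (S ∩ (H i).verts).ncard := ncard_iUnion_le_of_fintype _
      _ ≤ ∑ i, gpNumber (H i).coe :=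
        Finset.sum_le_sum fun i _ ↦ (hiso i).ncard_inter_verts_le_gpNumber hb hS hSf
  · simp [gpNumber_eq_zero_of_not_bddAbove hb]

/-- Isometric Cover Lemma. -/
theorem gp_isometric_cover {V : Type*} (G : SimpleGraph V) (hG : G.Connected)
    (k : ℕ) (H : Fin k → G.Subgraph)
    (hiso : ∀ i, IsIsometricSubgraph (H i))
    (hcov : (⋃ i, (H i).verts) = Set.univ) :
    gpNumber G ≤ ∑ i, gpNumber (H i).coe :=
  gp_isometric_cover_general G k H hiso hcov
end

section
/- The set of simplicial vertices of a connected graph G is a general position set of G. -/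
open SimpleGraph

/-- A vertex is simplicial if its neighborhood induces a complete subgraph. -/
def IsSimplicial {V : Type*} (G : SimpleGraph V) (v : V) : Prop :=
  ∀ a b : V, G.Adj v a → G.Adj v b → a ≠ b → G.Adj a b

namespace SimpleGraph

variable {V : Type*} {G : SimpleGraph V} {u v w : V}

theorem Reachable.exists_adj_dist_lt (h : G.Reachable u v) (hne : u ≠ v) :
    ∃ a, G.Adj a v ∧ G.dist u a < G.dist u v := by
  obtain ⟨p, hp⟩ := h.exists_walk_length_eq_dist
  have hnil : ¬p.Nil := Walk.not_nil_of_ne hne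
  refine ⟨p.penultimate, p.adj_penultimate hnil, ?_⟩
  calc G.dist u p.penultimate ≤ p.dropLast.length := dist_le _
    _ < p.length := by have := Walk.length_dropLast_add_one hnil; omega
    _ = G.dist u v := hp

theorem IsSimplicial.dist_le_one {a b : V} (hv : IsSimplicial G v) (ha : G.Adj v a)
    (hb : G.Adj v b) : G.dist a b ≤ 1 := by
  by_cases hab : a = b
  · simp [hab]
  · exact (dist_eq_one_iff_adj.mpr (hv a b ha hb hab)).le

/-- Both geodesics to `v` can be cut short at neighbours of `v`, and these neighbours are at
distance at most one. -/
theorem IsSimplicial.dist_lt_dist_add_dist (hv : IsSimplicial G v) (hu : G.Reachable u v)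
    (hw : G.Reachable v w) (huv : u ≠ v) (hvw : v ≠ w) :
    G.dist u w < G.dist u v + G.dist v w := by
  obtain ⟨a, hav, hua⟩ := hu.exists_adj_dist_lt huv
  obtain ⟨b, hbv, hwb⟩ := hw.symm.exists_adj_dist_lt hvw.symm
  rw [dist_comm (u := w), dist_comm (u := w)] at hwb
  have hab : G.Reachable a b := hav.reachable.trans hbv.reachable.symm
  calc G.dist u w ≤ G.dist u a + G.dist a w :=
        (hu.trans hav.reachable.symm).dist_triangle_left w
    _ ≤ G.dist u a + (G.dist a b + G.dist b w) := by
      gcongr; exact hab.dist_triangle_left w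
    _ < G.dist u v + G.dist v w := by have := hv.dist_le_one hav.symm hbv.symm; omega

end SimpleGraph

theorem simplicial_isGPSet {V : Type*} (G : SimpleGraph V) (hG : G.Connected) :
    IsGPSet G {v | IsSimplicial G v} := by
  intro x _ y hy z _ hxy hyz _
  exact (hy.dist_lt_dist_add_dist (hG x y) (hG y z) hxy hyz).ne
end

section
/- If G is a connected block graph and S is the set of simplicial vertices of G, then gp(G) = |S|. -/
/-!
Simplicial vertices are in general position: if a simplicial vertex `v` lay strictly inside a
geodesic, its two neighbours on it would be adjacent or equal, giving a shortcut.

Conversely, in a block graph a non-simplicial vertex `v` separates two of its neighbours, since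
otherwise they would lie on a cycle through `v`, hence in a common block, which is a clique.
If `S` is in general position and `v ∈ S`, the rest of `S` lies in one component of `G - v`.
Send a simplicial `v` to itself; for non-simplicial `v` take another component, whose vertex
farthest from `v` is simplicial.
This injects `S` into the simplicial vertices: if `v, w ∈ S` were sent to the same `x`, then
`w` would separate `v` from `x` and `v` would separate `w` from `x`, so each of `v`, `w` would be
strictly farther from `x` than the other.
-/

open SimpleGraph

/-- `B` induces a connected subgraph of `G` with no cut-vertex. -/
def IsBiconnectedSet {V : Type*} (G : SimpleGraph V) (B : Set V) : Prop :=
  (G.induce B).Connected ∧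
    ∀ v ∈ B, B = {v} ∨ (G.induce (B \ {v})).Connected

/-- A block of `G`: a maximal set of vertices inducing a connected subgraph
with no cut-vertex. -/
def IsBlock {V : Type*} (G : SimpleGraph V) (B : Set V) : Prop :=
  IsBiconnectedSet G B ∧ ∀ B', IsBiconnectedSet G B' → B ⊆ B' → B' = B

/-- A block graph: every block is a complete (induced) subgraph. -/
def IsBlockGraph {V : Type*} (G : SimpleGraph V) : Prop :=
  ∀ B : Set V, IsBlock G B → G.IsClique B

namespace SimpleGraph

variable {V : Type*} {G : SimpleGraph V}

def ReachableAvoiding (G : SimpleGraph V) (s x y : V) : Prop :=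
  ∃ p : G.Walk x y, s ∉ p.support

namespace ReachableAvoiding

variable {s x y z : V}

lemma refl (h : x ≠ s) : G.ReachableAvoiding s x x :=
  ⟨.nil, by simpa using h.symm⟩

lemma symm (h : G.ReachableAvoiding s x y) : G.ReachableAvoiding s y x := by
  obtain ⟨p, hp⟩ := h
  exact ⟨p.reverse, by simpa using hp⟩

lemma trans (hxy : G.ReachableAvoiding s x y) (hyz : G.ReachableAvoiding s y z) :
    G.ReachableAvoiding s x z := by
  obtain ⟨p, hp⟩ := hxy
  obtain ⟨q, hq⟩ := hyz
  exact ⟨p.append q, by simp [Walk.mem_support_append_iff, hp, hq]⟩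

lemma ne_right (h : G.ReachableAvoiding s x y) : y ≠ s := by
  obtain ⟨p, hp⟩ := h
  rintro rfl
  exact hp p.end_mem_support

end ReachableAvoiding

lemma Adj.reachableAvoiding {s x y : V} (h : G.Adj x y) (hx : x ≠ s) (hy : y ≠ s) :
    G.ReachableAvoiding s x y :=
  ⟨h.toWalk, by simp [hx.symm, hy.symm]⟩

namespace Connected

variable (hG : G.Connected)
include hG

lemma dist_eq_add_of_not_reachableAvoiding {s x y : V} (h : ¬ G.ReachableAvoiding s x y) :
    G.dist x y = G.dist x s + G.dist s y := by
  classical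
  obtain ⟨p, hp⟩ := (hG x y).exists_walk_length_eq_dist
  have hs : s ∈ p.support := by
    by_contra hs
    exact h ⟨p, hs⟩
  have h_split : (p.takeUntil s hs).length + (p.dropUntil s hs).length = p.length := by
    rw [← Walk.length_append, p.take_spec hs]
  have := dist_le (p.takeUntil s hs)
  have := dist_le (p.dropUntil s hs)
  have : G.dist x y ≤ G.dist x s + G.dist s y := hG.dist_triangle
  omega

lemma reachableAvoiding_or_reachableAvoiding {v w : V} (hvw : v ≠ w) (x : V) :
    G.ReachableAvoiding v w x ∨ G.ReachableAvoiding w v x := by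
  by_contra! h
  have hw := hG.dist_eq_add_of_not_reachableAvoiding h.1
  have hv := hG.dist_eq_add_of_not_reachableAvoiding h.2
  have := hG.pos_dist_of_ne hvw
  rw [dist_comm (u := w) (v := v)] at hw
  omega

lemma exists_adj_dist_lt {x v : V} (hxv : x ≠ v) :
    ∃ a, G.Adj a v ∧ G.dist x a < G.dist x v := by
  obtain ⟨p, hp⟩ := (hG x v).exists_walk_length_eq_dist
  have hnil : ¬ p.Nil := Walk.not_nil_of_ne hxv
  refine ⟨p.penultimate, p.adj_penultimate hnil, ?_⟩
  have := dist_le p.dropLast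
  have := p.dropLast.length_concat (p.adj_penultimate hnil)
  rw [Walk.concat_dropLast] at this
  omega

lemma isGPSet_setOf_isSimplicial : IsGPSet G {v | IsSimplicial G v} := by
  intro x _ v hv z _ hxv hvz _ hgeod
  obtain ⟨a, hav, hxa⟩ := hG.exists_adj_dist_lt hxv
  obtain ⟨b, hbv, hzb⟩ := hG.exists_adj_dist_lt hvz.symm
  have hab : G.dist a b ≤ 1 := by
    rcases eq_or_ne a b with rfl | hne
    · simp
    · exact (dist_eq_one_iff_adj.2 (hv a b hav.symm hbv.symm hne)).le
  have := hG.dist_triangle (u := x) (v := a) (w := z)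
  have := hG.dist_triangle (u := a) (v := b) (w := z)
  rw [dist_comm (u := z), dist_comm (u := z)] at hzb
  omega

end Connected

namespace Walk

lemma IsCycle.connected_induce_support_diff_start {u : V} {c : G.Walk u u} (hc : c.IsCycle) :
    (G.induce ({v | v ∈ c.support} \ {u})).Connected := by
  have htail : ¬ c.tail.Nil := not_nil_of_ne (c.adj_snd hc.not_nil).ne'
  have hsupp : c.support = u :: (c.tail.dropLast.support ++ [u]) := by
    rw [support_dropLast_concat htail, cons_support_tail hc.not_nil]
  have hu : u ∉ c.tail.dropLast.support := by
    have := hc.isPath_tail.support_nodup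
    rw [← support_dropLast_concat htail, List.nodup_append] at this
    exact fun h => this.2.2 u h u (List.mem_singleton_self u) rfl
  have hset : {v | v ∈ c.support} \ {u} = {v | v ∈ c.tail.dropLast.support} := by
    ext v
    rw [hsupp]
    simp only [Set.mem_sdiff, Set.mem_ofPred_eq, List.mem_cons, List.mem_append,
      Set.mem_singleton_iff]
    grind
  rw [hset]
  exact c.tail.dropLast.connected_induce_support

lemma IsCycle.isBiconnectedSet_support {u : V} {c : G.Walk u u} (hc : c.IsCycle) :
    IsBiconnectedSet G {v | v ∈ c.support} := by
  classical
  refine ⟨c.connected_induce_support, fun w hw => Or.inr ?_⟩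
  have hrot : {v | v ∈ c.support} = {v | v ∈ (c.rotate w hw).support} := by
    ext v
    simp
  rw [hrot]
  exact (hc.rotate hw).connected_induce_support_diff_start

end Walk

end SimpleGraph

lemma IsBiconnectedSet.exists_isBlock_superset {V : Type*} [Finite V] {G : SimpleGraph V}
    {B : Set V} (hB : IsBiconnectedSet G B) : ∃ M, IsBlock G M ∧ B ⊆ M := by
  obtain ⟨M, ⟨hM, hBM⟩, hmax⟩ :=
    Set.Finite.exists_maximalFor id {C | IsBiconnectedSet G C ∧ B ⊆ C} (Set.toFinite _)
      ⟨B, hB, le_rfl⟩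
  exact ⟨M, ⟨hM, fun C hC hMC => (hmax ⟨hC, hBM.trans hMC⟩ hMC).antisymm hMC⟩, hBM⟩

namespace IsBlockGraph

variable {V : Type*} [Finite V] {G : SimpleGraph V} (hB : IsBlockGraph G)
include hB

lemma not_reachableAvoiding_of_not_adj {s a b : V} (ha : G.Adj s a) (hb : G.Adj s b)
    (hab : a ≠ b) (hnadj : ¬ G.Adj a b) : ¬ G.ReachableAvoiding s a b := by
  classical
  rintro ⟨p, hp⟩
  let q := p.bypass
  have hsq : s ∉ q.support := fun h => hp (p.support_bypass_subset_support h)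
  have hc : (Walk.cons ha (q.concat hb.symm)).IsCycle := by
    refine (Walk.cons_isCycle_iff _ _).2 ⟨p.bypass_isPath.concat hsq hb.symm, ?_⟩
    simp only [Walk.edges_concat, List.concat_eq_append, List.mem_append, List.mem_singleton,
      Sym2.eq_iff, not_or]
    exact ⟨fun h => hsq (q.fst_mem_support_of_mem_edges h), by grind [hb.ne]⟩
  obtain ⟨M, hM, hcM⟩ := hc.isBiconnectedSet_support.exists_isBlock_superset
  exact hnadj (hB M hM (hcM (by simp)) (hcM (by simp)) hab)

lemma exists_adj_forall_not_reachableAvoiding {v : V} (hv : ¬ IsSimplicial G v) {T : Set V}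
    (hT : ∀ t ∈ T, ∀ t' ∈ T, G.ReachableAvoiding v t t') :
    ∃ c, G.Adj v c ∧ ∀ t ∈ T, ¬ G.ReachableAvoiding v t c := by
  simp only [IsSimplicial, not_forall] at hv
  obtain ⟨a, b, ha, hb, hab, hnadj⟩ := hv
  have hsep := hB.not_reachableAvoiding_of_not_adj ha hb hab hnadj
  by_cases hTa : ∀ t ∈ T, ¬ G.ReachableAvoiding v t a
  · exact ⟨a, ha, hTa⟩
  · push Not at hTa
    obtain ⟨t, ht, hta⟩ := hTa
    exact ⟨b, hb, fun t' ht' ht'b => hsep (hta.symm.trans ((hT t ht t' ht').trans ht'b))⟩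

lemma exists_isSimplicial_reachableAvoiding (hG : G.Connected) {s c : V} (hc : c ≠ s) :
    ∃ x, IsSimplicial G x ∧ G.ReachableAvoiding s c x := by
  obtain ⟨x, hcx, hmax⟩ :=
    Set.exists_max_image {y | G.ReachableAvoiding s c y} (G.dist s) (Set.toFinite _)
      ⟨c, .refl hc⟩
  refine ⟨x, by_contra fun hx => ?_, hcx⟩
  have hxs : x ≠ s := hcx.ne_right
  obtain ⟨r, hxr, hr⟩ := hB.exists_adj_forall_not_reachableAvoiding hx (T := {s})
    (by simpa using ReachableAvoiding.refl hxs.symm)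
  have hsr : ¬ G.ReachableAvoiding x s r := hr s rfl
  have hrs : r ≠ s := by
    rintro rfl
    exact hsr (.refl hxs.symm)
  have hdist := hG.dist_eq_add_of_not_reachableAvoiding hsr
  have := hmax r (hcx.trans (hxr.reachableAvoiding hxs hrs))
  rw [dist_eq_one_iff_adj.2 hxr] at hdist
  omega

end IsBlockGraph

namespace IsGPSet

variable {V : Type*} {G : SimpleGraph V} {S : Set V} (hG : G.Connected) (hS : IsGPSet G S)
include hG hS

lemma reachableAvoiding {v t t' : V} (hv : v ∈ S) (ht : t ∈ S) (ht' : t' ∈ S) (htv : t ≠ v)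
    (ht'v : t' ≠ v) : G.ReachableAvoiding v t t' := by
  rcases eq_or_ne t t' with rfl | htt'
  · exact .refl htv
  · by_contra h
    exact hS t ht v hv t' ht' htv ht'v.symm htt' (hG.dist_eq_add_of_not_reachableAvoiding h)

variable [Finite V] (hB : IsBlockGraph G)
include hB

lemma exists_isSimplicial_forall_not_reachableAvoiding {v : V} (hv : v ∈ S) :
    ∃ x, IsSimplicial G x ∧ ∀ t ∈ S, t ≠ v → ¬ G.ReachableAvoiding v t x := by
  by_cases hsv : IsSimplicial G v
  · exact ⟨v, hsv, fun _ _ _ h => h.ne_right rfl⟩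
  obtain ⟨c, hvc, hc⟩ := hB.exists_adj_forall_not_reachableAvoiding hsv (T := S \ {v})
    fun t ht t' ht' => hS.reachableAvoiding hG hv ht.1 ht'.1 ht.2 ht'.2
  obtain ⟨x, hx, hcx⟩ := hB.exists_isSimplicial_reachableAvoiding hG hvc.ne'
  exact ⟨x, hx, fun t ht htv htx => hc t ⟨ht, htv⟩ (htx.trans hcx.symm)⟩

lemma ncard_le_ncard_setOf_isSimplicial : S.ncard ≤ {v | IsSimplicial G v}.ncard := by
  choose! g hg using fun v (hv : v ∈ S) =>
    hS.exists_isSimplicial_forall_not_reachableAvoiding hG hB hv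
  refine Set.ncard_le_ncard_of_injOn g (fun v hv => (hg v hv).1) ?_ (Set.toFinite _)
  intro v hv w hw hgvw
  by_contra hvw
  rcases hG.reachableAvoiding_or_reachableAvoiding hvw (g w) with h | h
  · exact (hg v hv).2 w hw (Ne.symm hvw) (hgvw ▸ h)
  · exact (hg w hw).2 v hv hvw h

end IsGPSet

theorem gp_blockGraph {V : Type*} [Fintype V] (G : SimpleGraph V)
    (hG : G.Connected) (hB : IsBlockGraph G) :
    gpNumber G = {v | IsSimplicial G v}.ncard := by
  refine IsGreatest.csSup_eq ⟨⟨_, hG.isGPSet_setOf_isSimplicial, Set.toFinite _, rfl⟩, ?_⟩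
  rintro _ ⟨S, hS, -, rfl⟩
  exact hS.ncard_le_ncard_setOf_isSimplicial hG hB
end

section
/- If T is a tree with at least two vertices and L is the set of leaves of T, then gp(T) = |L|. -/
open SimpleGraph

/-!
For `u ≠ v` in a tree let `towards u v` be the neighbour of `u` on the path to `v`; then `u` lies
on the geodesic between `x` and `y` whenever `towards u x ≠ towards u y`. A leaf has a single
neighbour, so it is never strictly inside a geodesic: the leaves are in general position.
Conversely, if `S` is in general position and `u ∈ S` is not a leaf, the other points of `S` lie
in a single branch at `u`; a farthest vertex of another branch is a leaf `f u` with `u` between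
`f u` and the rest of `S`. Hence `f` is injective on `S`, and `|S|` is at most the number of leaves.
-/

namespace SimpleGraph

variable {V : Type*} {G : SimpleGraph V} {u v w x y b : V}

theorem IsAcyclic.eq_of_isPath (hG : G.IsAcyclic) {p q : G.Walk u v} (hp : p.IsPath)
    (hq : q.IsPath) : p = q :=
  congrArg Subtype.val ((hG.subsingleton_path u v).elim ⟨p, hp⟩ ⟨q, hq⟩)

theorem IsAcyclic.length_eq_dist_of_isPath (hG : G.IsAcyclic) {p : G.Walk u v} (hp : p.IsPath) :
    p.length = G.dist u v := by
  obtain ⟨q, hq, hlen⟩ := p.reachable.exists_path_of_dist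
  rw [← hlen, hG.eq_of_isPath hp hq]

theorem IsAcyclic.snd_eq_of_adj_of_dist_lt (hG : G.IsAcyclic) {p : G.Walk u x} (hp : p.IsPath)
    (hb : G.Adj u b) (hlt : G.dist b x < G.dist u x) : p.snd = b := by
  classical
  obtain ⟨q, hq, hlen⟩ := (hb.reachable.symm.trans p.reachable).exists_path_of_dist
  have hu : u ∉ q.support := fun hu => by
    have := (dist_le (q.dropUntil u hu)).trans (q.length_dropUntil_le_length hu)
    omega
  rw [hG.eq_of_isPath hp (hq.cons (h := hb) hu), Walk.snd_cons]

theorem IsAcyclic.isPath_reverse_append (hG : G.IsAcyclic) {p : G.Walk u x} {q : G.Walk u y}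
    (hp : p.IsPath) (hq : q.IsPath) (hsnd : p.snd ≠ q.snd) : (p.reverse.append q).IsPath := by
  classical
  rw [Walk.isPath_def, Walk.support_append, Walk.support_reverse, List.nodup_append]
  refine ⟨List.nodup_reverse.mpr hp.support_nodup,
    hq.support_nodup.sublist (List.tail_sublist _), ?_⟩
  rintro t htp _ htq rfl
  have htu : t ≠ u := by
    rintro rfl
    have hqnd := hq.support_nodup
    rw [← q.cons_tail_support] at hqnd
    exact (List.nodup_cons.mp hqnd).1 htq
  have htp' : t ∈ p.support := List.mem_reverse.mp htp
  have htq' : t ∈ q.support := List.mem_of_mem_tail htq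
  apply hsnd
  rw [← p.snd_takeUntil htu htp', ← q.snd_takeUntil htu htq',
    hG.eq_of_isPath (hp.takeUntil htp') (hq.takeUntil htq')]

theorem IsAcyclic.dist_eq_add_of_snd_ne (hG : G.IsAcyclic) {p : G.Walk u x} {q : G.Walk u y}
    (hp : p.IsPath) (hq : q.IsPath) (hsnd : p.snd ≠ q.snd) :
    G.dist x y = G.dist x u + G.dist u y := by
  have h := hG.length_eq_dist_of_isPath (hG.isPath_reverse_append hp hq hsnd)
  rw [Walk.length_append, Walk.length_reverse, hG.length_eq_dist_of_isPath hp,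
    hG.length_eq_dist_of_isPath hq] at h
  rw [← h, dist_comm]

def leafSet (G : SimpleGraph V) : Set V := {v | (G.neighborSet v).ncard = 1}

theorem exists_adj_ne_of_ncard_neighborSet_ne_one (hvw : G.Adj v w)
    (hv : (G.neighborSet v).ncard ≠ 1) : ∃ c, G.Adj v c ∧ c ≠ w := by
  by_contra! hc
  exact hv (Set.ncard_eq_one.mpr ⟨w, Set.eq_singleton_iff_unique_mem.mpr ⟨hvw, hc⟩⟩)

theorem Connected.injOn_of_forall_dist_eq_add (hG : G.Connected) {S : Set V} {f : V → V}
    (hf : ∀ u ∈ S, ∀ t ∈ S, t ≠ u → G.dist t (f u) = G.dist t u + G.dist u (f u)) :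
    S.InjOn f := by
  intro u hu v hv hfuv
  by_contra hne
  have h₁ := hf u hu v hv (Ne.symm hne)
  have h₂ := hf v hv u hu hne
  rw [hfuv] at h₁
  have := hG.pos_dist_of_ne hne
  have := dist_comm (G := G) (u := u) (v := v)
  omega

namespace IsTree

variable (hT : G.IsTree)

noncomputable def path (u v : V) : G.Walk u v := (hT.existsUnique_path u v).exists.choose

theorem isPath_path (u v : V) : (hT.path u v).IsPath :=
  (hT.existsUnique_path u v).exists.choose_spec

noncomputable def towards (u v : V) : V := (hT.path u v).snd

theorem adj_towards (h : u ≠ v) : G.Adj u (hT.towards u v) :=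
  Walk.adj_snd (Walk.not_nil_of_ne h)

theorem towards_eq_of_adj_of_dist_lt (hb : G.Adj u b) (hlt : G.dist b v < G.dist u v) :
    hT.towards u v = b :=
  hT.isAcyclic.snd_eq_of_adj_of_dist_lt (hT.isPath_path u v) hb hlt

theorem towards_of_adj (hb : G.Adj u b) : hT.towards u b = b :=
  hT.towards_eq_of_adj_of_dist_lt hb (by simp [dist_eq_one_iff_adj.mpr hb])

theorem dist_towards_add_one (h : u ≠ v) : G.dist (hT.towards u v) v + 1 = G.dist u v := by
  rw [← hT.isAcyclic.length_eq_dist_of_isPath (hT.isPath_path u v),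
    ← Walk.length_tail_add_one (Walk.not_nil_of_ne h),
    hT.isAcyclic.length_eq_dist_of_isPath (hT.isPath_path u v).tail]
  rfl

theorem dist_eq_add_of_towards_ne (h : hT.towards u x ≠ hT.towards u y) :
    G.dist x y = G.dist x u + G.dist u y :=
  hT.isAcyclic.dist_eq_add_of_snd_ne (hT.isPath_path u x) (hT.isPath_path u y) h

theorem exists_leaf_towards_eq [Finite V] (hb : G.Adj u b) :
    ∃ l ∈ G.leafSet, hT.towards u l = b := by
  obtain ⟨l, hlb, hmax⟩ := Set.exists_max_image {x | hT.towards u x = b} (G.dist u)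
    (Set.toFinite _) ⟨b, hT.towards_of_adj hb⟩
  refine ⟨l, by_contra fun hleaf => ?_, hlb⟩
  have hlu : l ≠ u := by
    rintro rfl
    have := hmax b (hT.towards_of_adj hb)
    rw [dist_self, dist_eq_one_iff_adj.mpr hb] at this
    omega
  -- A second neighbour `c` of `l` would lie in the same branch, one step farther from `u`.
  obtain ⟨c, hc, hcne⟩ :=
    exists_adj_ne_of_ncard_neighborSet_ne_one (hT.adj_towards hlu) hleaf
  have hcu : G.dist c u = G.dist c l + G.dist l u :=
    hT.dist_eq_add_of_towards_ne (by rwa [hT.towards_of_adj hc])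
  have hbl := hT.dist_towards_add_one hlu.symm
  rw [hlb] at hbl
  have hbc := hT.connected.dist_triangle (u := b) (v := l) (w := c)
  have hlc : G.dist l c = 1 := dist_eq_one_iff_adj.mpr hc
  have hcomm₁ : G.dist c u = G.dist u c := dist_comm
  have hcomm₂ : G.dist c l = G.dist l c := dist_comm
  have hcomm₃ : G.dist l u = G.dist u l := dist_comm
  have hcb : hT.towards u c = b := hT.towards_eq_of_adj_of_dist_lt hb (by omega)
  have := hmax c hcb
  omega

end IsTree

end SimpleGraph

section GeneralPosition

variable {V : Type*} {G : SimpleGraph V} {S : Set V}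

theorem gpNumber_eq_ncard {L : Set V} (hL : IsGPSet G L) (hfin : L.Finite)
    (hmax : ∀ S, IsGPSet G S → S.Finite → S.ncard ≤ L.ncard) : gpNumber G = L.ncard :=
  IsGreatest.csSup_eq ⟨⟨L, hL, hfin, rfl⟩, by rintro _ ⟨S, hS, hSfin, rfl⟩; exact hmax S hS hSfin⟩

theorem isGPSet_leafSet (hT : G.IsTree) : IsGPSet G G.leafSet := by
  intro x _ y hy z _ hxy hyz hxz hxyz
  obtain ⟨m, hm⟩ := Set.ncard_eq_one.mp hy
  have htowards {w : V} (hyw : y ≠ w) : hT.towards y w = m := by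
    have h : hT.towards y w ∈ G.neighborSet y := hT.adj_towards hyw
    rwa [hm, Set.mem_singleton_iff] at h
  have hmx := hT.dist_towards_add_one hxy.symm
  have hmz := hT.dist_towards_add_one hyz
  rw [htowards hxy.symm] at hmx
  rw [htowards hyz] at hmz
  have := hT.connected.dist_triangle (u := x) (v := m) (w := z)
  have := dist_comm (G := G) (u := x) (v := m)
  have := dist_comm (G := G) (u := x) (v := y)
  omega

theorem IsGPSet.exists_leaf_dist_eq_add [Finite V] (hS : IsGPSet G S) (hT : G.IsTree) {u s : V}
    (hu : u ∈ S) (hs : s ∈ S) (hsu : s ≠ u) :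
    ∃ l ∈ G.leafSet, ∀ t ∈ S, t ≠ u → G.dist t l = G.dist t u + G.dist u l := by
  by_cases hleaf : u ∈ G.leafSet
  · exact ⟨u, hleaf, fun t _ _ => by rw [dist_self, add_zero]⟩
  obtain ⟨b, hb, hbs⟩ :=
    exists_adj_ne_of_ncard_neighborSet_ne_one (hT.adj_towards hsu.symm) hleaf
  obtain ⟨l, hl, hlb⟩ := hT.exists_leaf_towards_eq hb
  refine ⟨l, hl, fun t ht htu => hT.dist_eq_add_of_towards_ne ?_⟩
  have hts : hT.towards u t = hT.towards u s := by
    by_contra hne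
    exact hS t ht u hu s hs htu hsu.symm (by rintro rfl; exact hne rfl)
      (hT.dist_eq_add_of_towards_ne hne)
  rw [hts, hlb]
  exact hbs.symm

theorem IsGPSet.ncard_le_ncard_leafSet [Finite V] [Nontrivial V] (hS : IsGPSet G S)
    (hT : G.IsTree) : S.ncard ≤ G.leafSet.ncard := by
  rcases le_or_gt S.ncard 1 with hS₁ | hS₁
  · obtain ⟨x, y, hxy⟩ := exists_pair_ne V
    obtain ⟨l, hl, -⟩ := hT.exists_leaf_towards_eq (hT.adj_towards hxy)
    exact hS₁.trans ((Set.ncard_pos (Set.toFinite _)).mpr ⟨l, hl⟩)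
  have hbeyond (u : V) (hu : u ∈ S) :
      ∃ l ∈ G.leafSet, ∀ t ∈ S, t ≠ u → G.dist t l = G.dist t u + G.dist u l := by
    obtain ⟨s, hs, hsu⟩ := Set.exists_ne_of_one_lt_ncard hS₁ u
    exact hS.exists_leaf_dist_eq_add hT hu hs hsu
  choose! f hfL hf using hbeyond
  calc S.ncard = (f '' S).ncard :=
        (hT.connected.injOn_of_forall_dist_eq_add hf).ncard_image.symm
    _ ≤ G.leafSet.ncard := Set.ncard_le_ncard (Set.image_subset_iff.mpr hfL) (Set.toFinite _)

end GeneralPosition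

theorem gp_tree {V : Type*} [Fintype V] (G : SimpleGraph V)
    (hT : G.IsTree) (hV : 2 ≤ Fintype.card V) :
    gpNumber G = {v | (G.neighborSet v).ncard = 1}.ncard := by
  have : Nontrivial V := Fintype.one_lt_card_iff_nontrivial.mp hV
  exact gpNumber_eq_ncard (isGPSet_leafSet hT) (Set.toFinite _)
    fun S hS _ => hS.ncard_le_ncard_leafSet hT
end

section
/- For r ≥ 2, the glued binary tree GT(r) satisfies gp(GT(r)) = 2^r. -/
open SimpleGraph

/-- The vertices of the glued binary tree `GT(r)`: the internal vertices of the
two copies (copy indexed by `Bool`) of the complete binary tree of depth `r`,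
given by binary strings of length `< r`, together with the identified leaves
(quasi-leaves), given by binary strings of length `r`. -/
def GTVert (r : ℕ) : Type :=
  (Bool × {l : List Bool // l.length < r}) ⊕ {l : List Bool // l.length = r}

/-- The glued binary tree `GT(r)`: each internal vertex `l` of a copy is joined
to its two children `l ++ [x]` in the same copy (quasi-leaves being children of
both copies' internal vertices of length `r - 1`). -/
def gluedBinaryTree (r : ℕ) : SimpleGraph (GTVert r) :=
  SimpleGraph.fromRel (fun a b =>
    match a, b with
    | Sum.inl (c, l), Sum.inl (c', l') => c = c' ∧ ∃ x, (l' : List Bool) = (l : List Bool) ++ [x]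
    | Sum.inl (_, l), Sum.inr l' => ∃ x, (l' : List Bool) = (l : List Bool) ++ [x]
    | _, _ => False)

/-!
The `2 ^ r` quasi-leaves are in general position: two of them are at distance
`2 * (r - lcp)`, and the longest common prefix is an ultrametric.

Conversely, within one copy the distance is the tree distance of the strings, while the two
vertices with string `t` are `2 * (r - |t|)` apart. Let `F` be in general position and let `t`
have `|t| + h = r`; by induction on `h` at most `2 ^ h` members of `F` lie below `t`. If the
vertex `t` of copy `c` is in `F`, it lies on the geodesic between any two vertices of copy `c`
below its two different children, so below one child `F` has only internal vertices of the
other copy; these form a general position set in a binary tree of depth `h - 1`, hence number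
at most `2 ^ (h - 1)`. This leaves room for the vertex `t` itself, and for both vertices with
string `t` when `h ≥ 1`; when `h = 0` those two exclude the quasi-leaves below `t`.
-/

namespace List

lemma IsPrefix.eq_or_exists_append_singleton_prefix {α : Type*} {t u : List α} (h : t <+: u) :
    u = t ∨ ∃ x, t ++ [x] <+: u := by
  obtain ⟨_ | ⟨x, m⟩, rfl⟩ := h
  · simp
  · exact Or.inr ⟨x, m, by simp⟩

variable {α : Type*} [DecidableEq α]

def lcp : List α → List α → ℕ
  | x :: a, y :: b => if x = y then lcp a b + 1 else 0
  | _, _ => 0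

@[simp] lemma lcp_nil_left (b : List α) : lcp [] b = 0 := by cases b <;> rfl

@[simp] lemma lcp_nil_right (a : List α) : lcp a [] = 0 := by cases a <;> rfl

@[simp] lemma lcp_cons_cons (x y : α) (a b : List α) :
    lcp (x :: a) (y :: b) = if x = y then lcp a b + 1 else 0 := rfl

lemma lcp_comm : ∀ a b : List α, lcp a b = lcp b a
  | [], b => by simp
  | _ :: _, [] => by simp
  | x :: a, y :: b => by
    by_cases h : x = y
    · simp [h, lcp_comm a b]
    · simp [h, Ne.symm h]

lemma lcp_le_length_left : ∀ a b : List α, lcp a b ≤ a.length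
  | [], _ => by simp
  | _ :: _, [] => by simp
  | x :: a, y :: b => by
    have := lcp_le_length_left a b
    simp only [lcp_cons_cons, length_cons]; split_ifs <;> omega

lemma lcp_le_length_right (a b : List α) : lcp a b ≤ b.length :=
  lcp_comm a b ▸ lcp_le_length_left b a

lemma lcp_append_append (t a b : List α) : lcp (t ++ a) (t ++ b) = t.length + lcp a b := by
  induction t with
  | nil => simp
  | cons x t ih => simp only [cons_append, lcp_cons_cons, if_pos, ih, length_cons]; omega

lemma lcp_eq_length_left_iff : ∀ {a b : List α}, lcp a b = a.length ↔ a <+: b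
  | [], _ => by simp
  | _ :: _, [] => by simp
  | x :: a, y :: b => by
    by_cases h : x = y
    · simp [h, lcp_eq_length_left_iff]
    · simp [h]

lemma lcp_le_lcp_append (a b m : List α) : lcp a b ≤ lcp (a ++ m) b := by
  induction a generalizing b with
  | nil => simp
  | cons x a ih =>
    cases b with
    | nil => simp
    | cons y b => have := ih b; simp only [cons_append, lcp_cons_cons]; split_ifs <;> omega

lemma lcp_append_le (a b m : List α) : lcp (a ++ m) b ≤ lcp a b + m.length := by
  induction a generalizing b with
  | nil => simpa using lcp_le_length_left m b
  | cons x a ih =>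
    cases b with
    | nil => simp
    | cons y b => have := ih b; simp only [cons_append, lcp_cons_cons]; split_ifs <;> omega

lemma min_lcp_le_lcp : ∀ a b c : List α, min (lcp a b) (lcp b c) ≤ lcp a c
  | [], _, _ => by simp
  | _ :: _, [], _ => by simp
  | _ :: _, _ :: _, [] => by simp
  | x :: a, y :: b, z :: c => by
    have := min_lcp_le_lcp a b c
    by_cases h1 : x = y
    · subst h1
      by_cases h2 : x = z
      · subst h2; simp only [lcp_cons_cons, if_pos]; omega
      · simp [h2]
    · simp [h1]

lemma lcp_lt_length_left_of_ne {a b : List α} (h : a.length = b.length) (hab : a ≠ b) :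
    lcp a b < a.length :=
  (lcp_le_length_left a b).lt_of_ne fun he => hab ((lcp_eq_length_left_iff.1 he).eq_of_length h)

lemma take_lcp_prefix_right : ∀ a b : List α, a.take (lcp a b) <+: b
  | [], _ => by simp
  | _ :: _, [] => by simp
  | x :: a, y :: b => by
    by_cases h : x = y
    · subst h
      simpa using take_lcp_prefix_right a b
    · simp [h]

def treeDist (a b : List α) : ℕ := a.length + b.length - 2 * lcp a b

@[simp] lemma treeDist_self (a : List α) : treeDist a a = 0 := by
  simp only [treeDist, lcp_eq_length_left_iff.2 (prefix_refl a)]; omega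

lemma treeDist_comm (a b : List α) : treeDist a b = treeDist b a := by
  simp only [treeDist, lcp_comm a b]; omega

lemma treeDist_append_right (t m : List α) : treeDist t (t ++ m) = m.length := by
  have := lcp_append_append t [] m
  simp only [append_nil, lcp_nil_left] at this
  simp only [treeDist, length_append, this]; omega

lemma IsPrefix.treeDist_eq {a b : List α} (h : a <+: b) : treeDist a b = b.length - a.length := by
  obtain ⟨m, rfl⟩ := h
  simp [treeDist_append_right]

lemma treeDist_append_cons_of_ne {x y : α} (hxy : x ≠ y) (t a b : List α) :
    treeDist (t ++ x :: a) (t ++ y :: b) =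
      treeDist (t ++ x :: a) t + treeDist t (t ++ y :: b) := by
  rw [treeDist_comm _ t, treeDist_append_right, treeDist_append_right, treeDist,
    lcp_append_append]
  simp only [length_append, length_cons, lcp_cons_cons, hxy, if_false]; omega

lemma treeDist_append_singleton_le (a b : List α) (x : α) :
    treeDist (a ++ [x]) b ≤ treeDist a b + 1 ∧ treeDist a b ≤ treeDist (a ++ [x]) b + 1 := by
  have := lcp_le_lcp_append a b [x]
  have := lcp_append_le a b [x]
  have := lcp_le_length_left a b
  have := lcp_le_length_right a b
  simp only [treeDist, length_append, length_singleton] at *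
  omega

end List

namespace SimpleGraph

variable {V : Type*} {G : SimpleGraph V}

lemma Walk.le_add_length {f : V → ℕ} (hf : ∀ u v, G.Adj u v → f u ≤ f v + 1) :
    ∀ {u v : V} (p : G.Walk u v), f u ≤ f v + p.length
  | _, _, .nil => by simp
  | _, _, .cons h p => by
    have := hf _ _ h
    have := p.le_add_length hf
    rw [Walk.length_cons]; omega

lemma Reachable.le_add_dist {f : V → ℕ} (hf : ∀ u v, G.Adj u v → f u ≤ f v + 1) {u v : V}
    (h : G.Reachable u v) : f u ≤ f v + G.dist u v := by
  obtain ⟨p, hp⟩ := h.exists_walk_length_eq_dist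
  exact hp ▸ p.le_add_length hf

end SimpleGraph

namespace GTVert

variable {r : ℕ}

instance : DecidableEq (GTVert r) :=
  inferInstanceAs <|
    DecidableEq ((Bool × {l : List Bool // l.length < r}) ⊕ {l : List Bool // l.length = r})

def str : GTVert r → List Bool
  | .inl (_, l) => l
  | .inr l => l

lemma length_str_le : ∀ v : GTVert r, (str v).length ≤ r
  | .inl (_, l) => l.2.le
  | .inr l => l.2.le

def InCopy (c : Bool) : GTVert r → Prop
  | .inl (c', _) => c' = c
  | .inr _ => True

lemma inCopy_inr (c : Bool) (l : {l : List Bool // l.length = r}) :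
    InCopy c (.inr l : GTVert r) :=
  trivial

lemma inCopy_or_inCopy_not (c : Bool) : ∀ v : GTVert r, InCopy c v ∨ InCopy (!c) v
  | .inl (c', _) => by cases c <;> cases c' <;> simp [InCopy]
  | .inr _ => Or.inl trivial

lemma exists_inCopy (v : GTVert r) : ∃ c, InCopy c v :=
  (inCopy_or_inCopy_not false v).elim (⟨_, ·⟩) (⟨_, ·⟩)

lemma inCopy_of_length_str_eq (c : Bool) : ∀ {v : GTVert r}, (str v).length = r → InCopy c v
  | .inl (_, l), h => absurd h l.2.ne
  | .inr _, _ => trivial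

lemma eq_of_str_eq_of_length_eq :
    ∀ {u v : GTVert r}, str u = str v → (str u).length = r → u = v
  | .inr _, .inr _, h, _ => congrArg Sum.inr (Subtype.ext h)
  | .inl (_, l), _, _, hl => absurd hl l.2.ne
  | _, .inl (_, l), h, hl => by rw [h] at hl; exact absurd hl l.2.ne

def mk (c : Bool) (l : List Bool) (h : l.length ≤ r) : GTVert r :=
  if h' : l.length < r then .inl (c, ⟨l, h'⟩) else .inr ⟨l, by omega⟩

lemma mk_of_lt {c : Bool} {l : List Bool} (h : l.length < r) :
    (mk c l h.le : GTVert r) = .inl (c, ⟨l, h⟩) := dif_pos h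

lemma mk_of_eq {c : Bool} {l : List Bool} (h : l.length = r) :
    (mk c l h.le : GTVert r) = .inr ⟨l, h⟩ := dif_neg h.not_lt

@[simp] lemma str_mk (c : Bool) (l : List Bool) (h : l.length ≤ r) : str (mk c l h) = l := by
  rcases h.lt_or_eq with h | h
  · rw [mk_of_lt h]; rfl
  · rw [mk_of_eq h]; rfl

lemma inCopy_mk (c : Bool) (l : List Bool) (h : l.length ≤ r) : InCopy c (mk c l h) := by
  rcases h.lt_or_eq with h | h
  · rw [mk_of_lt h]; rfl
  · rw [mk_of_eq h]; trivial

lemma mk_str {c : Bool} : ∀ {v : GTVert r}, InCopy c v → mk c (str v) (length_str_le v) = v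
  | .inl (_, l), rfl => mk_of_lt l.2
  | .inr l, _ => mk_of_eq l.2

lemma mk_eq_mk_of_length_eq (c c' : Bool) {l : List Bool} (h : l.length = r) :
    (mk c l h.le : GTVert r) = mk c' l h.le :=
  eq_of_str_eq_of_length_eq (by simp) (by simpa using h)

lemma mk_ne_mk_not (c : Bool) {l : List Bool} (h : l.length < r) :
    (mk c l h.le : GTVert r) ≠ mk (!c) l h.le := by
  rw [mk_of_lt h, mk_of_lt h]
  intro he
  injection he with he
  cases c <;> simp at he

/-- Position on the path running from the root of copy `c` through the quasi-leaves to the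
root of copy `!c`. -/
def copyDepth (c : Bool) : GTVert r → ℕ
  | .inl (c', l) => if c' = c then l.1.length else 2 * r - l.1.length
  | .inr _ => r

lemma copyDepth_of_inCopy (c : Bool) {c' : Bool} :
    ∀ {v : GTVert r}, InCopy c' v →
      copyDepth c v = if c' = c then (str v).length else 2 * r - (str v).length
  | .inl (_, l), rfl => rfl
  | .inr l, _ => by simp only [copyDepth, str, l.2]; split_ifs <;> omega

end GTVert

namespace gluedBinaryTree

open GTVert List Finset

variable {r : ℕ}

lemma adj_mk_append_singleton (c : Bool) (l : List Bool) (x : Bool)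
    (h : (l ++ [x]).length ≤ r) :
    (gluedBinaryTree r).Adj (mk c l (le_trans (by simp) h)) (mk c (l ++ [x]) h) := by
  have hl : l.length < r := by simp only [length_append, length_singleton] at h; omega
  refine (fromRel_adj _ _ _).2
    ⟨fun he => by simpa using congrArg (List.length ∘ str) he, Or.inl ?_⟩
  rw [mk_of_lt hl]
  rcases h.lt_or_eq with h | h
  · rw [mk_of_lt h]; exact ⟨rfl, x, rfl⟩
  · rw [mk_of_eq h]; exact ⟨x, rfl⟩

lemma exists_inCopy_of_adj {u v : GTVert r} (h : (gluedBinaryTree r).Adj u v) :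
    ∃ c x, InCopy c u ∧ InCopy c v ∧ (str v = str u ++ [x] ∨ str u = str v ++ [x]) := by
  obtain ⟨-, hR | hR⟩ := (fromRel_adj _ _ _).1 h <;>
  rcases u with ⟨c, l⟩ | l <;> rcases v with ⟨c', l'⟩ | l' <;> try exact hR.elim
  · obtain ⟨hc, x, hx⟩ := hR; exact ⟨c, x, rfl, hc.symm, .inl hx⟩
  · obtain ⟨x, hx⟩ := hR; exact ⟨c, x, rfl, trivial, .inl hx⟩
  · obtain ⟨hc, x, hx⟩ := hR; exact ⟨c, x, rfl, hc, .inr hx⟩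
  · obtain ⟨x, hx⟩ := hR; exact ⟨c', x, trivial, rfl, .inr hx⟩

lemma exists_walk_mk_append (c : Bool) (l m : List Bool) (h : (l ++ m).length ≤ r) :
    ∃ p : (gluedBinaryTree r).Walk (mk c l (le_trans (by simp) h)) (mk c (l ++ m) h),
      p.length = m.length := by
  induction m generalizing l with
  | nil => exact ⟨Walk.nil.copy rfl (by simp), by simp⟩
  | cons x m ih =>
    have hx : (l ++ [x]).length ≤ r := by
      simp only [length_append, length_cons, length_nil] at h ⊢; omega
    obtain ⟨p, hp⟩ := ih (l ++ [x]) (by simpa using h)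
    exact ⟨(Walk.cons (adj_mk_append_singleton c l x hx) p).copy rfl (by simp), by simp [hp]⟩

lemma exists_walk_mk_of_prefix (c : Bool) {a b : List Bool} (hab : a <+: b)
    (hb : b.length ≤ r) :
    ∃ p : (gluedBinaryTree r).Walk (mk c a (hab.length_le.trans hb)) (mk c b hb),
      p.length = b.length - a.length := by
  obtain ⟨m, rfl⟩ := hab
  obtain ⟨p, hp⟩ := exists_walk_mk_append c a m hb
  exact ⟨p, by simp [hp]⟩

lemma connected : (gluedBinaryTree r).Connected := by
  have reach (c : Bool) {a b : List Bool} (hab : a <+: b) (hb : b.length ≤ r) :=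
    (exists_walk_mk_of_prefix c hab hb).elim fun p _ => p.reachable
  have hleaf : (replicate r false).length = r := length_replicate
  have hroot (c : Bool) : (gluedBinaryTree r).Reachable (mk false [] (Nat.zero_le r))
      (mk c [] (Nat.zero_le r)) :=
    (reach false nil_prefix hleaf.le).trans <| mk_eq_mk_of_length_eq false c hleaf ▸
      (reach c nil_prefix hleaf.le).symm
  refine (connected_iff_exists_forall_reachable _).2 ⟨mk false [] (Nat.zero_le r), fun v => ?_⟩
  obtain ⟨c, hc⟩ := exists_inCopy v
  exact (hroot c).trans (mk_str hc ▸ reach c nil_prefix (length_str_le v))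

lemma treeDist_le_dist (u v : GTVert r) :
    treeDist (str u) (str v) ≤ (gluedBinaryTree r).dist u v := by
  have hlip (u w : GTVert r) (h : (gluedBinaryTree r).Adj u w) :
      treeDist (str u) (str v) ≤ treeDist (str w) (str v) + 1 := by
    obtain ⟨-, x, -, -, he | he⟩ := exists_inCopy_of_adj h <;> rw [he]
    · exact (treeDist_append_singleton_le _ _ x).2
    · exact (treeDist_append_singleton_le _ _ x).1
  simpa using (connected.preconnected u v).le_add_dist hlip

lemma dist_mk_le_of_prefix {c : Bool} {v : GTVert r} (hv : InCopy c v) {a : List Bool}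
    (ha : a <+: str v) :
    (gluedBinaryTree r).dist (mk c a (ha.length_le.trans (length_str_le v))) v ≤
      (str v).length - a.length := by
  obtain ⟨p, hp⟩ := exists_walk_mk_of_prefix c ha (length_str_le v)
  have := dist_le p
  rwa [hp, mk_str hv] at this

lemma dist_eq_treeDist {c : Bool} {u v : GTVert r} (hu : InCopy c u) (hv : InCopy c v) :
    (gluedBinaryTree r).dist u v = treeDist (str u) (str v) := by
  refine le_antisymm ?_ (treeDist_le_dist u v)
  have hpu : (str u).take (lcp (str u) (str v)) <+: str u := take_prefix _ _
  have hpv := take_lcp_prefix_right (str u) (str v)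
  have hp := length_take_of_le (lcp_le_length_left (str u) (str v))
  have := lcp_le_length_left (str u) (str v)
  have := lcp_le_length_right (str u) (str v)
  calc (gluedBinaryTree r).dist u v
      ≤ (gluedBinaryTree r).dist u _ + (gluedBinaryTree r).dist _ v := connected.dist_triangle
    _ = (gluedBinaryTree r).dist _ u + (gluedBinaryTree r).dist _ v := by rw [dist_comm]
    _ ≤ _ := add_le_add (dist_mk_le_of_prefix hu hpu) (dist_mk_le_of_prefix hv hpv)
    _ = treeDist (str u) (str v) := by rw [hp, treeDist]; omega

lemma two_mul_sub_length_le_dist (c : Bool) {t : List Bool} (ht : t.length < r) :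
    2 * (r - t.length) ≤ (gluedBinaryTree r).dist (mk c t ht.le) (mk (!c) t ht.le) := by
  have hlip (u w : GTVert r) (h : (gluedBinaryTree r).Adj u w) :
      copyDepth c u ≤ copyDepth c w + 1 := by
    obtain ⟨c', x, hu, hw, he | he⟩ := exists_inCopy_of_adj h <;>
    · have := length_str_le u
      have := length_str_le w
      rw [copyDepth_of_inCopy c hu, copyDepth_of_inCopy c hw, he]
      simp only [length_append, length_singleton] at *
      split_ifs <;> omega
  have := (connected.preconnected (mk (!c) t ht.le) (mk c t ht.le)).le_add_dist hlip
  rw [copyDepth_of_inCopy c (inCopy_mk _ _ _), copyDepth_of_inCopy c (inCopy_mk _ _ _),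
    dist_comm] at this
  simp only [Bool.not_ne_self, if_true, if_false, str_mk] at this
  omega

variable {F : Finset (GTVert r)} {t : List Bool}

def below (F : Finset (GTVert r)) (t : List Bool) : Finset (GTVert r) :=
  F.filter (t <+: str ·)

lemma mem_below {s : GTVert r} : s ∈ below F t ↔ s ∈ F ∧ t <+: str s := mem_filter

lemma below_append_subset (m : List Bool) : below F (t ++ m) ⊆ below F t :=
  fun _ hs => mem_below.2 ⟨(mem_below.1 hs).1, (prefix_append t m).trans (mem_below.1 hs).2⟩

lemma card_below_le_add (ht : t.length < r) (c b : Bool) :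
    (below F t).card ≤
      (if mk c t ht.le ∈ F then 1 else 0) + (if mk (!c) t ht.le ∈ F then 1 else 0) +
        (below F (t ++ [b])).card + (below F (t ++ [!b])).card := by
  have hsub : below F t ⊆ (univ.filter (mk · t ht.le ∈ F)).image (mk · t ht.le) ∪
      univ.biUnion (fun b => below F (t ++ [b])) := by
    intro s hs
    obtain ⟨hsF, hts⟩ := mem_below.1 hs
    rcases hts.eq_or_exists_append_singleton_prefix with hst | ⟨x, hx⟩
    · obtain ⟨c', hc'⟩ := exists_inCopy s
      have hs' : mk c' t ht.le = s := by simpa only [hst] using mk_str hc'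
      exact mem_union_left _ (mem_image.2 ⟨c', mem_filter.2 ⟨mem_univ _, hs' ▸ hsF⟩, hs'⟩)
    · exact mem_union_right _ (mem_biUnion.2 ⟨x, mem_univ _, mem_below.2 ⟨hsF, hx⟩⟩)
  have := (card_le_card hsub).trans <| (card_union_le _ _).trans <|
    add_le_add (card_image_le.trans_eq (card_filter _ _)) card_biUnion_le
  rw [Fintype.sum_bool, Fintype.sum_bool] at this
  cases c <;> cases b <;> simp only [Bool.not_true, Bool.not_false] <;> omega

lemma exists_forall_mem_below_not_inCopy (hF : IsGPSet (gluedBinaryTree r) F) {c : Bool}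
    (ht : t.length < r) (htop : mk c t ht.le ∈ F) :
    ∃ b, ∀ s ∈ below F (t ++ [b]), ¬InCopy c s := by
  by_contra! hside
  obtain ⟨y, hy, hyc⟩ := hside false
  obtain ⟨z, hz, hzc⟩ := hside true
  obtain ⟨hyF, p, hp⟩ := mem_below.1 hy
  obtain ⟨hzF, q, hq⟩ := mem_below.1 hz
  simp only [append_assoc, singleton_append] at hp hq
  have hx := inCopy_mk c t ht.le
  refine hF y hyF (mk c t ht.le) htop z hzF ?_ ?_ ?_ ?_
  · exact ne_of_apply_ne (length ∘ str) (by simp [← hp])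
  · exact ne_of_apply_ne (length ∘ str) (by simp [← hq])
  · exact ne_of_apply_ne str (by simp [← hp, ← hq])
  · rw [dist_eq_treeDist hyc hzc, dist_eq_treeDist hyc hx, dist_eq_treeDist hx hzc, str_mk,
      ← hp, ← hq]
    exact treeDist_append_cons_of_ne (by decide) t p q

lemma length_str_lt_of_mem_below (hF : IsGPSet (gluedBinaryTree r) F) {c : Bool}
    (ht : t.length < r) (h₀ : mk c t ht.le ∈ F) (h₁ : mk (!c) t ht.le ∈ F) {s : GTVert r}
    (hs : s ∈ below F t) : (str s).length < r := by
  obtain ⟨hsF, hts⟩ := mem_below.1 hs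
  refine (length_str_le s).lt_of_ne fun hsr => hF _ h₀ s hsF _ h₁ ?_ ?_ (mk_ne_mk_not c ht) ?_
  · exact ne_of_apply_ne (length ∘ str) (by simp only [Function.comp_apply, str_mk]; omega)
  · exact ne_of_apply_ne (length ∘ str) (by simp only [Function.comp_apply, str_mk]; omega)
  · refine le_antisymm connected.dist_triangle ?_
    rw [dist_eq_treeDist (inCopy_mk c t ht.le) (inCopy_of_length_str_eq c hsr),
      dist_eq_treeDist (inCopy_of_length_str_eq (!c) hsr) (inCopy_mk (!c) t ht.le), str_mk,
      str_mk, treeDist_comm _ t, hts.treeDist_eq, hsr]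
    have := two_mul_sub_length_le_dist c ht
    omega

/-- Below `t` these lie in a binary tree of depth `h - 1`; note `2 ^ 0 / 2 = 0`. -/
lemma card_below_le_of_forall_not_inCopy (hF : IsGPSet (gluedBinaryTree r) F) (c : Bool) :
    ∀ (h : ℕ) (t : List Bool), t.length + h = r → (∀ s ∈ below F t, ¬InCopy c s) →
      (below F t).card ≤ 2 ^ h / 2
  | 0, t, ht, hnot => by
    refine (card_eq_zero.2 (eq_empty_of_forall_notMem fun s hs => hnot s hs ?_)).le
    refine inCopy_of_length_str_eq c (le_antisymm (length_str_le s) ?_)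
    have := (mem_below.1 hs).2.length_le
    omega
  | h + 1, t, ht, hnot => by
    have ht' : t.length < r := by omega
    have hsides (b : Bool) :=
      card_below_le_of_forall_not_inCopy hF c h (t ++ [b])
        (by simp only [length_append, length_singleton]; omega)
        fun s hs => hnot s (below_append_subset _ hs)
    have hc : mk c t ht'.le ∉ F := fun hc =>
      hnot _ (mem_below.2 ⟨hc, by simp⟩) (inCopy_mk c t ht'.le)
    have := Nat.one_le_two_pow (n := h)
    by_cases htop : mk (!c) t ht'.le ∈ F
    · obtain ⟨b, hb⟩ := exists_forall_mem_below_not_inCopy hF ht' htop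
      have hempty : (below F (t ++ [b])).card = 0 := card_eq_zero.2 <| eq_empty_of_forall_notMem
        fun s hs => (inCopy_or_inCopy_not c s).elim (hnot s (below_append_subset _ hs)) (hb s hs)
      have := card_below_le_add (F := F) ht' c b
      have := hsides (!b)
      simp only [hc, htop, if_false, if_true] at *
      rw [pow_succ, Nat.mul_div_cancel _ two_pos]
      omega
    · have := card_below_le_add (F := F) ht' c false
      have := hsides false
      have := hsides true
      simp only [hc, htop, if_false, Bool.not_false] at *
      rw [pow_succ, Nat.mul_div_cancel _ two_pos]
      omega

lemma card_below_le_two_pow_succ_of_both_mk_mem (hF : IsGPSet (gluedBinaryTree r) F) {h : ℕ}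
    (ht : t.length + (h + 1) = r) (hsides : ∀ b, (below F (t ++ [b])).card ≤ 2 ^ h) {c : Bool}
    (hc : mk c t (by omega) ∈ F) (hc' : mk (!c) t (by omega) ∈ F) :
    (below F t).card ≤ 2 ^ (h + 1) := by
  have ht' : t.length < r := by omega
  obtain ⟨b, hb⟩ := exists_forall_mem_below_not_inCopy hF ht' hc
  obtain ⟨b', hb'⟩ := exists_forall_mem_below_not_inCopy hF ht' hc'
  have hadd := card_below_le_add (F := F) ht' c b
  simp only [hc, hc', if_true] at hadd
  rw [pow_succ]
  rcases Bool.eq_or_eq_not b' b with rfl | rfl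
  · have hempty : (below F (t ++ [b'])).card = 0 := card_eq_zero.2 <|
      eq_empty_of_forall_notMem fun s hs => (inCopy_or_inCopy_not c s).elim (hb s hs) (hb' s hs)
    have := hsides (!b')
    rcases Nat.eq_zero_or_pos h with rfl | hpos
    · -- in `GT(1)`, a 4-cycle, the two roots exclude both quasi-leaves
      have hleaf : (below F (t ++ [!b'])).card = 0 := card_eq_zero.2 <|
        eq_empty_of_forall_notMem fun s hs => by
          have := length_str_lt_of_mem_below hF ht' hc hc' (below_append_subset _ hs)
          have := (mem_below.1 hs).2.length_le
          simp only [length_append, length_singleton] at this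
          omega
      omega
    · have := Nat.pow_le_pow_right two_pos hpos
      omega
  · have := card_below_le_of_forall_not_inCopy hF c h (t ++ [b])
      (by simp only [length_append, length_singleton]; omega) hb
    have := card_below_le_of_forall_not_inCopy hF (!c) h (t ++ [!b])
      (by simp only [length_append, length_singleton]; omega) hb'
    have := Nat.one_le_two_pow (n := h)
    omega

lemma card_below_le_two_pow_succ (hF : IsGPSet (gluedBinaryTree r) F) {h : ℕ}
    (ht : t.length + (h + 1) = r) (hsides : ∀ b, (below F (t ++ [b])).card ≤ 2 ^ h) :
    (below F t).card ≤ 2 ^ (h + 1) := by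
  have ht' : t.length < r := by omega
  by_cases hany : ∃ c, mk c t ht'.le ∈ F
  · obtain ⟨c, hc⟩ := hany
    by_cases hc' : mk (!c) t ht'.le ∈ F
    · exact card_below_le_two_pow_succ_of_both_mk_mem hF ht hsides hc hc'
    obtain ⟨b, hb⟩ := exists_forall_mem_below_not_inCopy hF ht' hc
    have := card_below_le_of_forall_not_inCopy hF c h (t ++ [b])
      (by simp only [length_append, length_singleton]; omega) hb
    have := hsides (!b)
    have := Nat.one_le_two_pow (n := h)
    have hadd := card_below_le_add (F := F) ht' c b
    simp only [hc, hc', if_true, if_false] at hadd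
    rw [pow_succ]
    omega
  · simp only [not_exists] at hany
    have hadd := card_below_le_add (F := F) ht' false false
    have := hsides false
    have := hsides true
    simp only [hany, if_false, Bool.not_false] at hadd
    rw [pow_succ]
    omega

lemma card_below_le_two_pow (hF : IsGPSet (gluedBinaryTree r) F) :
    ∀ (h : ℕ) (t : List Bool), t.length + h = r → (below F t).card ≤ 2 ^ h
  | 0, t, ht => card_le_one.2 fun u hu v hv => by
    have hstr {s} (hs : s ∈ below F t) : str s = t :=
      ((mem_below.1 hs).2.eq_of_length_le (by have := length_str_le s; omega)).symm
    exact eq_of_str_eq_of_length_eq ((hstr hu).trans (hstr hv).symm) (by rw [hstr hu]; omega)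
  | h + 1, t, ht => card_below_le_two_pow_succ hF ht fun b =>
    card_below_le_two_pow hF h (t ++ [b]) (by simp only [length_append, length_singleton]; omega)

lemma card_le_two_pow_of_isGPSet (hF : IsGPSet (gluedBinaryTree r) F) : F.card ≤ 2 ^ r := by
  simpa [below] using card_below_le_two_pow hF r [] (by simp)

lemma isGPSet_range_inr : IsGPSet (gluedBinaryTree r) (Set.range Sum.inr) := by
  rintro _ ⟨x, rfl⟩ _ ⟨y, rfl⟩ _ ⟨z, rfl⟩ hxy hyz hxz
  have hlt {a b : {l : List Bool // l.length = r}} (hab : (Sum.inr a : GTVert r) ≠ .inr b) :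
      lcp a.1 b.1 < r := by
    simpa [a.2] using lcp_lt_length_left_of_ne (a.2.trans b.2.symm) fun h =>
      hab (congrArg _ (Subtype.ext h))
  have := hlt hxy
  have := hlt hyz
  have := hlt hxz
  have := min_lcp_le_lcp x.1 y.1 z.1
  rw [dist_eq_treeDist (inCopy_inr false x) (inCopy_inr false z),
    dist_eq_treeDist (inCopy_inr false x) (inCopy_inr false y),
    dist_eq_treeDist (inCopy_inr false y) (inCopy_inr false z)]
  simp only [str, treeDist, x.2, y.2, z.2]
  omega

lemma ncard_range_inr : (Set.range (Sum.inr : _ → GTVert r)).ncard = 2 ^ r := by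
  rw [Set.ncard_range_of_injective Sum.inr_injective]
  exact (by simp : Nat.card (List.Vector Bool r) = 2 ^ r)

end gluedBinaryTree

open gluedBinaryTree in
theorem gp_gluedBinaryTree_general (r : ℕ) :
    gpNumber (gluedBinaryTree r) = 2 ^ r := by
  refine IsGreatest.csSup_eq ⟨⟨_, isGPSet_range_inr,
    Set.finite_range (Sum.inr : List.Vector Bool r → GTVert r), ncard_range_inr⟩, ?_⟩
  rintro n ⟨S, hS, hSfin, rfl⟩
  rw [Set.ncard_eq_toFinset_card S hSfin]
  exact card_le_two_pow_of_isGPSet (by rwa [hSfin.coe_toFinset])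

theorem gp_gluedBinaryTree (r : ℕ) (hr : 2 ≤ r) :
    gpNumber (gluedBinaryTree r) = 2 ^ r :=
  gp_gluedBinaryTree_general r
end

section
/- If G is a connected graph with diam(G) ≤ 2k + 1 for some k ≥ 1, then gp(G) ≥ α_k(G), where α_k(G) is the k-packing number of G. -/
open SimpleGraph

/-- A `k`-packing of `G`: a set of vertices pairwise at distance more than `k`. -/
def IsKPacking {V : Type*} (G : SimpleGraph V) (k : ℕ) (S : Set V) : Prop :=
  S.Pairwise (fun u v => k < G.dist u v)

/-- The `k`-packing number of `G`. -/
noncomputable def kPackingNumber {V : Type*} (G : SimpleGraph V) (k : ℕ) : ℕ :=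
  sSup {n | ∃ S : Set V, IsKPacking G k S ∧ S.Finite ∧ S.ncard = n}

theorem IsKPacking.isGPSet {V : Type*} {G : SimpleGraph V} {k : ℕ} {S : Set V}
    (hS : IsKPacking G k S) (hdiam : G.ediam ≠ ⊤)
    (hd : G.diam ≤ 2 * k + 1) : IsGPSet G S := by
  intro x hx y hy z hz hxy hyz hxz hgeod
  have hxy' : k < G.dist x y := hS hx hy hxy
  have hyz' : k < G.dist y z := hS hy hz hyz
  have hxz' : G.dist x z ≤ G.diam := G.dist_le_diam hdiam
  omega

theorem bddAbove_setOf_ncard_of_finite {α : Type*} [Finite α] (P : Set α → Prop) :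
    BddAbove {n | ∃ S : Set α, P S ∧ S.Finite ∧ S.ncard = n} :=
  ⟨Nat.card α, by rintro _ ⟨S, -, -, rfl⟩; exact S.ncard_le_card⟩

theorem kPackingNumber_le_gpNumber_of_forall_isGPSet {V : Type*} [Finite V]
    {G : SimpleGraph V} {k : ℕ} (h : ∀ S, IsKPacking G k S → IsGPSet G S) :
    kPackingNumber G k ≤ gpNumber G := by
  apply csSup_le_csSup (bddAbove_setOf_ncard_of_finite _)
  · exact ⟨0, ∅, Set.pairwise_empty _, Set.finite_empty, Set.ncard_empty V⟩
  · rintro _ ⟨S, hS, hfin, rfl⟩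
    exact ⟨S, h S hS, hfin, rfl⟩

theorem gp_ge_kPacking_general {V : Type*} [Fintype V] (G : SimpleGraph V)
    (hG : G.Connected) (k : ℕ) (hd : G.diam ≤ 2 * k + 1) :
    kPackingNumber G k ≤ gpNumber G := by
  have : Nonempty V := hG.nonempty
  have hdiam : G.ediam ≠ ⊤ := G.connected_iff_ediam_ne_top.mp hG
  exact kPackingNumber_le_gpNumber_of_forall_isGPSet fun _ hS ↦ hS.isGPSet hdiam hd

theorem gp_ge_kPacking {V : Type*} [Fintype V] (G : SimpleGraph V)
    (hG : G.Connected) (k : ℕ) (hk : 1 ≤ k) (hd : G.diam ≤ 2 * k + 1) :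
    kPackingNumber G k ≤ gpNumber G :=
  gp_ge_kPacking_general G hG k hd
end

section
/- Let G be a connected graph with diam(G) = k ≥ 2, and let F be a set of edges of G such that d(e,f) = k for every two distinct edges e, f ∈ F (where edge distance is the minimum distance between endpoints). Then gp(G) ≥ 2|F|. -/
/-!
Every vertex of `G` lies within distance `diam G = k` of every other, while `d(e, f) = k`
bounds all endpoint distances from below; so two endpoints of distinct edges of `F` are at
distance exactly `k`, and two endpoints of the same edge at distance `1`. Among three
endpoints at most one pair lies on a common edge, so the three pairwise distances are
`k, k, k` or `1, k, k`, and no one of them is the sum of the other two.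
-/

open SimpleGraph

/-- The distance between two edges: the minimum distance between an endpoint
of one and an endpoint of the other. -/
noncomputable def edgeDist {V : Type*} (G : SimpleGraph V) (e f : Sym2 V) : ℕ :=
  sInf {n | ∃ u ∈ e, ∃ v ∈ f, G.dist u v = n}

open Finset

section

variable {V : Type*} {G : SimpleGraph V} {k : ℕ} {F : Finset (Sym2 V)}

lemma le_gpNumber [Finite V] {S : Set V} (hS : IsGPSet G S) : S.ncard ≤ gpNumber G :=
  le_csSup ⟨Nat.card V, by rintro n ⟨T, -, -, rfl⟩; exact Set.ncard_le_card T⟩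
    ⟨S, hS, S.toFinite, rfl⟩

lemma isGPSet_of_dist_eq_one_or_eq {S : Set V} (hk : k ≠ 0)
    (hdist : ∀ x ∈ S, ∀ y ∈ S, x ≠ y → G.dist x y = 1 ∨ G.dist x y = k)
    (hmatch : ∀ x ∈ S, ∀ y ∈ S, ∀ z ∈ S, x ≠ z → G.dist x y = 1 → G.dist y z ≠ 1) :
    IsGPSet G S := by
  intro x hx y hy z hz hxy hyz hxz
  have := hmatch x hx y hy z hz hxz
  rcases hdist x hx y hy hxy with h₁ | h₁ <;> rcases hdist y hy z hz hyz with h₂ | h₂ <;>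
    rcases hdist x hx z hz hxz with h₃ | h₃ <;> omega

lemma edgeDist_le_dist {e f : Sym2 V} {u v : V} (hu : u ∈ e) (hv : v ∈ f) :
    edgeDist G e f ≤ G.dist u v :=
  Nat.sInf_le ⟨u, hu, v, hv, rfl⟩

lemma dist_eq_diam_of_edgeDist_eq_diam (hG : G.diam ≠ 0) {e f : Sym2 V}
    (hef : edgeDist G e f = G.diam) {u v : V} (hu : u ∈ e) (hv : v ∈ f) :
    G.dist u v = G.diam :=
  (dist_le_diam (ediam_ne_top_of_diam_ne_zero hG)).antisymm (hef ▸ edgeDist_le_dist hu hv)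

lemma Sym2.eq_or_eq_of_mem {x y z : V} {e : Sym2 V} (hxy : x ≠ y) (hx : x ∈ e) (hy : y ∈ e)
    (hz : z ∈ e) : z = x ∨ z = y := by
  rwa [(Sym2.mem_and_mem_iff hxy).1 ⟨hx, hy⟩, Sym2.mem_iff] at hz

lemma card_biUnion_toFinset_eq_two_mul [DecidableEq V]
    (hF : ∀ e ∈ F, ¬e.IsDiag) (hdisj : (F : Set (Sym2 V)).PairwiseDisjoint Sym2.toFinset) :
    #(F.biUnion Sym2.toFinset) = 2 * #F := by
  rw [card_biUnion hdisj, sum_congr rfl fun e he => Sym2.card_toFinset_of_not_isDiag e (hF e he),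
    sum_const, smul_eq_mul, mul_comm]

lemma pairwiseDisjoint_toFinset [DecidableEq V] (hk : k ≠ 0)
    (hcross : ∀ e ∈ F, ∀ f ∈ F, e ≠ f → ∀ u ∈ e, ∀ v ∈ f, G.dist u v = k) :
    (F : Set (Sym2 V)).PairwiseDisjoint Sym2.toFinset := by
  intro e he f hf hef
  rw [Function.onFun, Finset.disjoint_left]
  intro x hxe hxf
  have := hcross e he f hf hef x (Sym2.mem_toFinset.1 hxe) x (Sym2.mem_toFinset.1 hxf)
  rw [dist_self] at this
  exact hk this.symm

lemma dist_eq_one_or_eq_of_mem (hF : ↑F ⊆ G.edgeSet)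
    (hcross : ∀ e ∈ F, ∀ f ∈ F, e ≠ f → ∀ u ∈ e, ∀ v ∈ f, G.dist u v = k)
    {e f : Sym2 V} (he : e ∈ F) (hf : f ∈ F) {u v : V} (hu : u ∈ e) (hv : v ∈ f) (huv : u ≠ v) :
    G.dist u v = 1 ∨ G.dist u v = k := by
  obtain rfl | hef := eq_or_ne e f
  · left
    rw [dist_eq_one_iff_adj, ← mem_edgeSet, ← (Sym2.mem_and_mem_iff huv).1 ⟨hu, hv⟩]
    exact hF he
  · exact Or.inr (hcross e he f hf hef u hu v hv)

lemma mem_of_dist_eq_one (hk : k ≠ 1)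
    (hcross : ∀ e ∈ F, ∀ f ∈ F, e ≠ f → ∀ u ∈ e, ∀ v ∈ f, G.dist u v = k)
    {e f : Sym2 V} (he : e ∈ F) (hf : f ∈ F) {u v : V} (hu : u ∈ e) (hv : v ∈ f)
    (huv : G.dist u v = 1) : v ∈ e := by
  obtain rfl | hef := eq_or_ne e f
  · exact hv
  · exact absurd (huv ▸ hcross e he f hf hef u hu v hv) hk.symm

lemma isGPSet_biUnion_toFinset [DecidableEq V] (hk : 2 ≤ k) (hF : ↑F ⊆ G.edgeSet)
    (hcross : ∀ e ∈ F, ∀ f ∈ F, e ≠ f → ∀ u ∈ e, ∀ v ∈ f, G.dist u v = k) :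
    IsGPSet G ↑(F.biUnion Sym2.toFinset) := by
  have hmem {x : V} (hx : x ∈ (F.biUnion Sym2.toFinset : Set V)) : ∃ e ∈ F, x ∈ e := by
    simpa using hx
  refine isGPSet_of_dist_eq_one_or_eq (k := k) (by omega) ?_ ?_
  · rintro x hx y hy hxy
    obtain ⟨e, he, hxe⟩ := hmem hx
    obtain ⟨f, hf, hyf⟩ := hmem hy
    exact dist_eq_one_or_eq_of_mem hF hcross he hf hxe hyf hxy
  · rintro x hx y hy z hz hxz hxy hyz
    obtain ⟨e, he, hxe⟩ := hmem hx
    obtain ⟨f, hf, hyf⟩ := hmem hy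
    obtain ⟨g, hg, hzg⟩ := hmem hz
    have hye : y ∈ e := mem_of_dist_eq_one (by omega) hcross he hf hxe hyf hxy
    have hze : z ∈ e := mem_of_dist_eq_one (by omega) hcross he hg hye hzg hyz
    have hxy' : x ≠ y := by rintro rfl; simp at hxy
    have hyz' : y ≠ z := by rintro rfl; simp at hyz
    exact (Sym2.eq_or_eq_of_mem hxy' hxe hye hze).elim (fun h => hxz h.symm) hyz'.symm

end

theorem gp_ge_two_edge_family_general {V : Type*} [Fintype V] (G : SimpleGraph V)
    (k : ℕ) (hk : 2 ≤ k) (hd : G.diam = k)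
    (F : Finset (Sym2 V)) (hF : ↑F ⊆ G.edgeSet)
    (hFd : ∀ e ∈ F, ∀ f ∈ F, e ≠ f → edgeDist G e f = k) :
    2 * F.card ≤ gpNumber G := by
  classical
  have hk0 : k ≠ 0 := by omega
  have hcross : ∀ e ∈ F, ∀ f ∈ F, e ≠ f → ∀ u ∈ e, ∀ v ∈ f, G.dist u v = k := by
    subst hd
    exact fun e he f hf hef u hu v hv =>
      dist_eq_diam_of_edgeDist_eq_diam hk0 (hFd e he f hf hef) hu hv
  calc 2 * #F = #(F.biUnion Sym2.toFinset) :=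
        (card_biUnion_toFinset_eq_two_mul (fun e he => G.not_isDiag_of_mem_edgeSet (hF he))
          (pairwiseDisjoint_toFinset hk0 hcross)).symm
    _ ≤ gpNumber G :=
        Set.ncard_coe_finset _ ▸ le_gpNumber (isGPSet_biUnion_toFinset hk hF hcross)

theorem gp_ge_two_edge_family {V : Type*} [Fintype V] (G : SimpleGraph V)
    (hG : G.Connected) (k : ℕ) (hk : 2 ≤ k) (hd : G.diam = k)
    (F : Finset (Sym2 V)) (hF : ↑F ⊆ G.edgeSet)
    (hFd : ∀ e ∈ F, ∀ f ∈ F, e ≠ f → edgeDist G e f = k) :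
    2 * F.card ≤ gpNumber G :=
  gp_ge_two_edge_family_general G k hk hd F hF hFd
end

section
/- The general position number of the Petersen graph equals 6. -/
open SimpleGraph

/-- The Petersen graph as the Kneser graph `K(5,2)`: vertices are the
2-element subsets of a 5-element set, adjacent when disjoint. -/
def petersenGraph : SimpleGraph {s : Finset (Fin 5) // s.card = 2} :=
  SimpleGraph.fromRel (fun s t => Disjoint (s : Finset (Fin 5)) (t : Finset (Fin 5)))

/-! In a triangle-free graph of diameter two, three distinct vertices lie on a common
geodesic exactly when they form a path `x - y - z`, so a set `S` is in general position iff
every vertex of `S` has at most one neighbour in `S`. In the cubic Petersen graph every vertex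
of such an `S` then sends at least two edges out of `S`, while each of the `10 - |S|` other
vertices receives at most three, so `2 |S| ≤ 3 (10 - |S|)`, i.e. `|S| ≤ 6`. The six 2-subsets
of `{0, 1, 2, 3}` attain the bound: among them each one is adjacent only to its complement in
`{0, 1, 2, 3}`. -/

open Finset

namespace SimpleGraph

variable {V : Type*} {G : SimpleGraph V}

lemma dist_eq_two_of_adj_of_adj {x y z : V} (hxy : G.Adj x y) (hyz : G.Adj y z) (hxz : x ≠ z)
    (hnxz : ¬G.Adj x z) : G.dist x z = 2 := by
  have h : G.edist x z = 2 := edist_eq_two_iff.mpr ⟨hxz, hnxz, y, hxy, hyz.symm⟩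
  simp [dist, h]

lemma dist_le_two_of_ediam_le_two (h : G.ediam ≤ 2) (x y : V) : G.dist x y ≤ 2 :=
  ENat.toNat_le_toNat (edist_le_ediam.trans h) (by decide)

lemma IsGPSet.subsingleton_inter_neighborSet (hG : G.CliqueFree 3) {S : Set V}
    (hS : IsGPSet G S) {y : V} (hy : y ∈ S) : (S ∩ G.neighborSet y).Subsingleton := by
  classical
  rintro x ⟨hx, hyx⟩ z ⟨hz, hyz⟩
  by_contra hxz
  have hnxz : ¬G.Adj x z := fun hadj =>
    hG {x, y, z} (is3Clique_triple_iff.mpr ⟨hyx.symm, hadj, hyz⟩)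
  apply hS x hx y hy z hz hyx.ne.symm hyz.ne hxz
  rw [dist_eq_two_of_adj_of_adj hyx.symm hyz hxz hnxz, dist_eq_one_iff_adj.mpr hyx.symm,
    dist_eq_one_iff_adj.mpr hyz]

lemma isGPSet_of_subsingleton_inter_neighborSet (hG : G.ediam ≤ 2) {S : Set V}
    (hS : ∀ y ∈ S, (S ∩ G.neighborSet y).Subsingleton) : IsGPSet G S := by
  intro x hx y hy z hz hxy hyz hxz hgeod
  have : Nonempty V := ⟨x⟩
  have hconn : G.Connected := connected_of_ediam_ne_top (hG.trans_lt (by decide)).ne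
  have hxy_pos := hconn.pos_dist_of_ne hxy
  have hyz_pos := hconn.pos_dist_of_ne hyz
  have hxz_le := dist_le_two_of_ediam_le_two hG x z
  have hadj_xy : G.Adj x y := dist_eq_one_iff_adj.mp (by omega)
  have hadj_yz : G.Adj y z := dist_eq_one_iff_adj.mp (by omega)
  exact hxz (hS y hy ⟨hx, hadj_xy.symm⟩ ⟨hz, hadj_yz⟩)

lemma card_mul_pred_le_card_compl_mul [Fintype V] [DecidableEq V] [DecidableRel G.Adj] {d : ℕ}
    (hG : G.IsRegularOfDegree d) (T : Finset V)
    (hT : ∀ y ∈ T, ((T : Set V) ∩ G.neighborSet y).Subsingleton) :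
    #T * (d - 1) ≤ #Tᶜ * d := by
  have hleave : ∀ y ∈ T, d - 1 ≤ #(Tᶜ.bipartiteAbove G.Adj y) := by
    intro y hy
    have hin : #(G.neighborFinset y ∩ T) ≤ 1 := by
      rw [card_le_one_iff_subsingleton_coe, ← coe_sort_coe, Set.subsingleton_coe, coe_inter,
        coe_neighborFinset, Set.inter_comm]
      exact hT y hy
    have hsplit := card_inter_add_card_sdiff (G.neighborFinset y) T
    have hdiff : G.neighborFinset y \ T = Tᶜ.bipartiteAbove G.Adj y := by
      ext x; simp [bipartiteAbove, and_comm]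
    rw [card_neighborFinset_eq_degree, hG y, hdiff] at hsplit
    omega
  have henter : ∀ x ∈ Tᶜ, #(T.bipartiteBelow G.Adj x) ≤ d := by
    intro x _
    calc #(T.bipartiteBelow G.Adj x) ≤ #(G.neighborFinset x) :=
          card_le_card fun y hy => by simpa [bipartiteBelow, adj_comm] using (mem_filter.mp hy).2
      _ = d := hG x
  simpa only [smul_eq_mul] using card_nsmul_le_card_nsmul G.Adj hleave henter

lemma IsGPSet.ncard_mul_pred_le [Fintype V] [DecidableEq V] [DecidableRel G.Adj] {d : ℕ}
    (hG : G.CliqueFree 3) (hreg : G.IsRegularOfDegree d) {S : Set V} (hS : IsGPSet G S) :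
    S.ncard * (d - 1) ≤ (Fintype.card V - S.ncard) * d := by
  classical
  have h := card_mul_pred_le_card_compl_mul hreg S.toFinset fun y hy => by
    simpa using hS.subsingleton_inter_neighborSet hG (Set.mem_toFinset.mp hy)
  rwa [card_compl, ← Set.ncard_eq_toFinset_card'] at h

end SimpleGraph

open SimpleGraph

instance : DecidableRel petersenGraph.Adj := fun x y =>
  decidable_of_iff _ (fromRel_adj _ x y).symm

lemma petersenGraph_adj {s t : {s : Finset (Fin 5) // s.card = 2}} :
    petersenGraph.Adj s t ↔ Disjoint s.1 t.1 := by
  rw [petersenGraph, fromRel_adj, disjoint_comm, or_self, and_iff_right_iff_imp]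
  rintro h rfl
  simpa [disjoint_self.mp h] using s.2

lemma petersenGraph_isRegularOfDegree : petersenGraph.IsRegularOfDegree 3 := by
  intro v; revert v; decide

lemma petersenGraph_ediam_le_two : petersenGraph.ediam ≤ 2 := by
  refine ediam_le_iff.mpr fun s t => not_lt.mp fun h => ?_
  obtain ⟨hne, hnadj, hempty⟩ := two_lt_edist_iff.mp h
  have hcommon : ∀ s t, s ≠ t → ¬petersenGraph.Adj s t →
      ∃ u, petersenGraph.Adj s u ∧ petersenGraph.Adj t u := by
    decide
  obtain ⟨u, hsu, htu⟩ := hcommon s t hne hnadj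
  exact (Set.eq_empty_iff_forall_notMem.mp hempty) u ⟨hsu, htu⟩

lemma petersenGraph_cliqueFree_three : petersenGraph.CliqueFree 3 := by
  intro t ht
  obtain ⟨a, b, c, hab, hac, hbc, rfl⟩ := is3Clique_iff.mp ht
  simp only [petersenGraph_adj] at hab hac hbc
  have h6 : #(a.1 ∪ b.1 ∪ c.1) = 6 := by
    rw [card_union_of_disjoint (disjoint_union_left.mpr ⟨hac, hbc⟩), card_union_of_disjoint hab,
      a.2, b.2, c.2]
  have h5 := card_le_univ (a.1 ∪ b.1 ∪ c.1)
  simp only [Fintype.card_fin] at h5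
  omega

lemma card_petersenGraph_vertices : Fintype.card {s : Finset (Fin 5) // s.card = 2} = 10 := by
  decide

def petersenGPSet : Finset {s : Finset (Fin 5) // s.card = 2} := {s | 4 ∉ s.1}

lemma card_petersenGPSet : #petersenGPSet = 6 := by decide

lemma subsingleton_petersenGPSet_inter_neighborSet :
    ∀ y ∈ (petersenGPSet : Set _),
      ((petersenGPSet : Set _) ∩ petersenGraph.neighborSet y).Subsingleton := by
  have h : ∀ y ∈ petersenGPSet, ∀ x ∈ petersenGPSet, ∀ z ∈ petersenGPSet,
      petersenGraph.Adj y x → petersenGraph.Adj y z → x = z := by decide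
  rintro y hy x ⟨hx, hyx⟩ z ⟨hz, hyz⟩
  exact h y hy x hx z hz hyx hyz

theorem gp_petersen : gpNumber petersenGraph = 6 := by
  refine IsGreatest.csSup_eq ⟨⟨petersenGPSet, ?_, petersenGPSet.finite_toSet, ?_⟩, ?_⟩
  · exact isGPSet_of_subsingleton_inter_neighborSet petersenGraph_ediam_le_two
      subsingleton_petersenGPSet_inter_neighborSet
  · rw [Set.ncard_coe_finset, card_petersenGPSet]
  · rintro n ⟨S, hS, -, rfl⟩
    have h := hS.ncard_mul_pred_le petersenGraph_cliqueFree_three petersenGraph_isRegularOfDegree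
    rw [card_petersenGraph_vertices] at h
    omega
end
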